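/- arXiv:2006.13367 — 12 statements merged into one kernel-verified Lean document; each statement's English description precedes it below -/
import Mathlib

section
/- The number of set partitions of {1,...,n+1} into d blocks such that no block contains two consecutive integers equals S(n, d-1), the Stirling number of the second kind, for all n ≥ 0 and d ≥ 1. -/
open Finset

/-- Stirling numbers of the second kind. -/
def stirling2 : ℕ → ℕ → ℕ
  | 0, 0 => 1
  | 0, _ + 1 => 0
  | _ + 1, 0 => 0
  | n + 1, k + 1 => stirling2 n k + (k + 1) * stirling2 n (k + 1)

/-- Encoding of restricted partitions: `g` maps each element to the minimum of its block. -/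
def Pd (m d : ℕ) (g : Fin m → Fin m) : Prop :=
  ((∀ i, g i ≤ i) ∧ (∀ i, g (g i) = g i) ∧
      ∀ i j, g i = g j → (j : ℕ) ≠ (i : ℕ) + 1) ∧
    (Finset.univ.filter fun v => g v = v).card = d

instance (m d : ℕ) : DecidablePred (Pd m d) := fun g => by unfold Pd; infer_instance

def RP (m d : ℕ) :=
  {g : Fin m → Fin m // Pd m d g}

instance (m d : ℕ) : Fintype (RP m d) := by unfold RP; infer_instance

/-- The count. -/
def A (m d : ℕ) : ℕ := ((Finset.univ : Finset (Fin m → Fin m)).filter (Pd m d)).card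

lemma card_RP (m d : ℕ) : Nat.card (RP m d) = A m d := by
  rw [Nat.card_eq_fintype_card]
  exact Fintype.card_subtype _


lemma Finpartition.eq_of_part_eq {α : Type*} [DecidableEq α] [Fintype α]
    {P Q : Finpartition (Finset.univ : Finset α)} (h : ∀ a, P.part a = Q.part a) : P = Q := by
  have key : ∀ (P Q : Finpartition (Finset.univ : Finset α)), (∀ a, P.part a = Q.part a) →
      ∀ b ∈ P.parts, b ∈ Q.parts := by
    intro P Q h b hb
    obtain ⟨a, ha⟩ := P.nonempty_of_mem_parts hb
    have hpa : P.part a = b := P.part_eq_of_mem hb ha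
    rw [← hpa, h]
    exact Q.part_mem.2 (mem_univ a)
  ext b
  exact ⟨key P Q h b, key Q P (fun a => (h a).symm) b⟩


def kerS {m : ℕ} (g : Fin m → Fin m) : Setoid (Fin m) :=
  ⟨fun a b => g a = g b, ⟨fun _ => rfl, fun h => h.symm, fun h h' => h.trans h'⟩⟩

instance {m : ℕ} (g : Fin m → Fin m) : DecidableRel (kerS g).r :=
  fun _ _ => instDecidableEqFin _ _ _

lemma mem_part_kerS {m : ℕ} (g : Fin m → Fin m) (a b : Fin m) :
    b ∈ (Finpartition.ofSetoid (kerS g)).part a ↔ g a = g b :=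
  Finpartition.mem_part_ofSetoid_iff_rel

def pmin {m : ℕ} (P : Finpartition (Finset.univ : Finset (Fin m))) : Fin m → Fin m :=
  fun i => (P.part i).min' (P.nonempty_of_mem_parts (P.part_mem.2 (mem_univ i)))

lemma pmin_mem {m : ℕ} (P : Finpartition (Finset.univ : Finset (Fin m))) (i : Fin m) :
    pmin P i ∈ P.part i := min'_mem _ _

lemma pmin_le {m : ℕ} (P : Finpartition (Finset.univ : Finset (Fin m)))
    {i : Fin m} {b : Fin m} (hb : b ∈ P.part i) : pmin P i ≤ b := min'_le _ _ hb

-- Step A : equiv between partitions and base g's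
def phi (m : ℕ) :
    Finpartition (Finset.univ : Finset (Fin (m+1))) ≃
      {g : Fin (m+1) → Fin (m+1) // (∀ i, g i ≤ i) ∧ ∀ i, g (g i) = g i} where
  toFun P := by
    refine ⟨pmin P, ?_, ?_⟩
    · intro i
      exact pmin_le P (P.mem_part (mem_univ i))
    · intro i
      have : P.part (pmin P i) = P.part i :=
        P.part_eq_of_mem (P.part_mem.2 (mem_univ i)) (pmin_mem P i)
      show pmin P _ = _
      unfold pmin
      congr 1
  invFun g := Finpartition.ofSetoid (kerS g.1)
  left_inv P := by
    apply Finpartition.eq_of_part_eq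
    intro a
    ext b
    rw [mem_part_kerS]
    show pmin P a = pmin P b ↔ _
    constructor
    · intro h
      have h1 : pmin P a ∈ P.part a := pmin_mem P a
      have h2 : pmin P a ∈ P.part b := h ▸ pmin_mem P b
      have := P.eq_of_mem_parts (P.part_mem.2 (mem_univ a)) (P.part_mem.2 (mem_univ b)) h1 h2
      rw [this]
      exact P.mem_part (mem_univ b)
    · intro hb
      have : P.part b = P.part a := P.part_eq_of_mem (P.part_mem.2 (mem_univ a)) hb
      unfold pmin
      congr 1
      exact this.symm
  right_inv g := by
    apply Subtype.ext
    funext i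
    show pmin _ i = g.1 i
    apply le_antisymm
    · apply pmin_le
      rw [mem_part_kerS]
      exact (g.2.2 i).symm
    · apply le_min'
      intro b hb
      rw [mem_part_kerS] at hb
      calc g.1 i = g.1 b := hb
        _ ≤ b := g.2.1 b

lemma pmin_congr {m : ℕ} (P : Finpartition (Finset.univ : Finset (Fin m))) {i j : Fin m}
    (h : P.part i = P.part j) : pmin P i = pmin P j := by
  unfold pmin; congr 1

lemma part_eq_of_pmin_eq {m : ℕ} (P : Finpartition (Finset.univ : Finset (Fin m))) {i j : Fin m}
    (h : pmin P i = pmin P j) : P.part i = P.part j := by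
  have h1 : pmin P i ∈ P.part i := pmin_mem P i
  have h2 : pmin P i ∈ P.part j := h ▸ pmin_mem P j
  exact P.eq_of_mem_parts (P.part_mem.2 (mem_univ i)) (P.part_mem.2 (mem_univ j)) h1 h2

lemma card_parts_eq_fix {m : ℕ} (P : Finpartition (Finset.univ : Finset (Fin m))) :
    P.parts.card = (Finset.univ.filter fun v => pmin P v = v).card := by
  symm
  apply Finset.card_bij (fun v _ => P.part v)
  · intro v hv
    exact P.part_mem.2 (mem_univ v)
  · intro v hv w hw h
    simp only [mem_filter] at hv hw
    rw [← hv.2, ← hw.2]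
    exact pmin_congr P h
  · intro b hb
    obtain ⟨a, ha⟩ := P.nonempty_of_mem_parts hb
    have hpa : P.part a = b := P.part_eq_of_mem hb ha
    refine ⟨pmin P a, ?_, ?_⟩
    · simp only [mem_filter, mem_univ, true_and]
      have : P.part (pmin P a) = P.part a :=
        P.part_eq_of_mem (P.part_mem.2 (mem_univ a)) (pmin_mem P a)
      rw [pmin_congr P this]
    · have hpp : P.part (pmin P a) = P.part a :=
        P.part_eq_of_mem (P.part_mem.2 (mem_univ a)) (pmin_mem P a)
      rw [hpp, hpa]

lemma nocons_iff {m : ℕ} (P : Finpartition (Finset.univ : Finset (Fin m))) :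
    (∀ b ∈ P.parts, ∀ i j : Fin m, i ∈ b → j ∈ b → (j : ℕ) ≠ (i : ℕ) + 1) ↔
      (∀ i j : Fin m, pmin P i = pmin P j → (j : ℕ) ≠ (i : ℕ) + 1) := by
  constructor
  · intro h i j hij
    have hp := part_eq_of_pmin_eq P hij
    exact h (P.part i) (P.part_mem.2 (mem_univ i)) i j (P.mem_part (mem_univ i))
      (hp ▸ P.mem_part (mem_univ j))
  · intro h b hb i j hi hj
    have hpi : P.part i = b := P.part_eq_of_mem hb hi
    have hpj : P.part j = b := P.part_eq_of_mem hb hj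
    exact h i j (pmin_congr P (hpi.trans hpj.symm))

def stepA (m d : ℕ) :
    {P : Finpartition (Finset.univ : Finset (Fin (m+1))) //
        P.parts.card = d ∧
        ∀ b ∈ P.parts, ∀ i j : Fin (m+1), i ∈ b → j ∈ b → (j : ℕ) ≠ (i : ℕ) + 1} ≃
      RP (m+1) d :=
  (Equiv.subtypeEquiv (q := fun g => (Finset.univ.filter fun v => g.1 v = v).card = d ∧
      ∀ i j : Fin (m+1), g.1 i = g.1 j → (j : ℕ) ≠ (i : ℕ) + 1) (phi m) (fun P => by
    show _ ↔ ((Finset.univ.filter fun v => pmin P v = v).card = d ∧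
      ∀ i j : Fin (m+1), pmin P i = pmin P j → (j : ℕ) ≠ (i : ℕ) + 1)
    rw [← card_parts_eq_fix, ← nocons_iff])).trans
  ⟨fun x => ⟨x.1.1, ⟨⟨x.1.2.1, x.1.2.2, x.2.2⟩, x.2.1⟩⟩,
   fun y => ⟨⟨y.1, y.2.1.1, y.2.1.2.1⟩, y.2.2, y.2.1.2.2⟩,
   fun _ => rfl, fun _ => rfl⟩

/-! ### Restriction and extension -/

def res {k : ℕ} (g : Fin (k+2) → Fin (k+2)) : Fin (k+1) → Fin (k+1) :=
  fun i => ⟨min (g i.castSucc : ℕ) (i : ℕ), lt_of_le_of_lt (min_le_right _ _) i.isLt⟩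

lemma res_val {k : ℕ} {g : Fin (k+2) → Fin (k+2)} (hle : ∀ i, g i ≤ i) (i : Fin (k+1)) :
    ((res g i : ℕ)) = (g i.castSucc : ℕ) := by
  have : (g i.castSucc : ℕ) ≤ (i : ℕ) := by
    simpa [Fin.le_def] using (hle i.castSucc)
  exact min_eq_left this

lemma res_castSucc {k : ℕ} {g : Fin (k+2) → Fin (k+2)} (hle : ∀ i, g i ≤ i) (i : Fin (k+1)) :
    (res g i).castSucc = g i.castSucc := by
  apply Fin.ext
  simpa using res_val hle i

def ext' {k : ℕ} (g' : Fin (k+1) → Fin (k+1)) (v : Fin (k+2)) : Fin (k+2) → Fin (k+2) :=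
  Fin.snoc (fun j => (g' j).castSucc) v

@[simp] lemma ext'_castSucc {k : ℕ} (g' : Fin (k+1) → Fin (k+1)) (v : Fin (k+2)) (j : Fin (k+1)) :
    ext' g' v j.castSucc = (g' j).castSucc := by
  simp [ext']

@[simp] lemma ext'_last {k : ℕ} (g' : Fin (k+1) → Fin (k+1)) (v : Fin (k+2)) :
    ext' g' v (Fin.last (k+1)) = v := by
  simp [ext']

lemma res_ext' {k : ℕ} (g' : Fin (k+1) → Fin (k+1)) (hle' : ∀ i, g' i ≤ i) (v : Fin (k+2)) :
    res (ext' g' v) = g' := by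
  funext i
  apply Fin.ext
  show min _ _ = _
  rw [ext'_castSucc]
  simp only [Fin.coe_castSucc]
  exact min_eq_left (hle' i)

lemma ext'_res {k : ℕ} {g : Fin (k+2) → Fin (k+2)} (hle : ∀ i, g i ≤ i) :
    ext' (res g) (g (Fin.last (k+1))) = g := by
  funext i
  induction i using Fin.lastCases with
  | last => simp
  | cast j => rw [ext'_castSucc, res_castSucc hle]

/-! ### Property transfer -/

section transfer
variable {k : ℕ} {g : Fin (k+2) → Fin (k+2)} {g' : Fin (k+1) → Fin (k+1)} {v : Fin (k+2)}

lemma res_le (hle : ∀ i, g i ≤ i) : ∀ i, res g i ≤ i := fun i => by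
  rw [Fin.le_def, res_val hle]
  simpa [Fin.le_def] using hle i.castSucc

lemma res_idem (hle : ∀ i, g i ≤ i) (hid : ∀ i, g (g i) = g i) :
    ∀ i, res g (res g i) = res g i := fun i => by
  apply Fin.ext
  rw [res_val hle, res_val hle, res_castSucc hle, hid]

lemma res_nc (hle : ∀ i, g i ≤ i) (hnc : ∀ i j, g i = g j → (j : ℕ) ≠ (i : ℕ) + 1) :
    ∀ i j, res g i = res g j → (j : ℕ) ≠ (i : ℕ) + 1 := fun i j h => by
  have : g i.castSucc = g j.castSucc := by
    rw [← res_castSucc hle, ← res_castSucc hle, h]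
  simpa using hnc i.castSucc j.castSucc this

lemma fix_split (hle : ∀ i, g i ≤ i) :
    (Finset.univ.filter fun w => g w = w).card =
      ((Finset.univ.filter fun w => res g w = w)).card +
        (if g (Fin.last (k+1)) = Fin.last (k+1) then 1 else 0) := by
  rw [Finset.card_filter, Finset.card_filter, Fin.sum_univ_castSucc]
  congr 1
  apply Finset.sum_congr rfl
  intro j _
  congr 1
  simp only [eq_iff_iff]
  constructor
  · intro h
    apply Fin.ext
    rw [res_val hle, h]
    simp
  · intro h
    rw [← res_castSucc hle, h]

lemma ext'_le (hle' : ∀ i, g' i ≤ i) : ∀ i, ext' g' v i ≤ i := fun i => by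
  induction i using Fin.lastCases with
  | last => simp [Fin.le_last]
  | cast j =>
    rw [ext'_castSucc, Fin.le_def]
    simpa using hle' j

lemma ext'_idem (hid' : ∀ i, g' (g' i) = g' i)
    (hv : v = Fin.last (k+1) ∨ ∃ w : Fin (k+1), v = w.castSucc ∧ g' w = w) :
    ∀ i, ext' g' v (ext' g' v i) = ext' g' v i := fun i => by
  induction i using Fin.lastCases with
  | last =>
    rw [ext'_last]
    rcases hv with h | ⟨w, rfl, hw⟩
    · rw [h, ext'_last]
    · rw [ext'_castSucc, hw]
  | cast j => rw [ext'_castSucc, ext'_castSucc, hid']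

lemma ext'_nc (hnc' : ∀ i j, g' i = g' j → (j : ℕ) ≠ (i : ℕ) + 1)
    (hv : v = Fin.last (k+1) ∨ ∃ w : Fin (k+1), v = w.castSucc ∧ w ≠ g' (Fin.last k)) :
    ∀ i j, ext' g' v i = ext' g' v j → (j : ℕ) ≠ (i : ℕ) + 1 := fun i j h => by
  induction j using Fin.lastCases with
  | last =>
    induction i using Fin.lastCases with
    | last => simp
    | cast a =>
      rw [ext'_castSucc, ext'_last] at h
      simp only [Fin.val_last, Fin.coe_castSucc]
      intro hk
      have ha : a = Fin.last k := by
        apply Fin.ext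
        simpa using hk.symm
      rcases hv with hv | ⟨w, rfl, hw⟩
      · rw [hv] at h
        have := congrArg Fin.val h
        simp at this
        omega
      · have : g' a = w := Fin.castSucc_injective _ h
        exact hw (ha ▸ this ▸ rfl)
  | cast b =>
    induction i using Fin.lastCases with
    | last =>
      have := b.isLt
      simp only [Fin.coe_castSucc, Fin.val_last]
      omega
    | cast a =>
      rw [ext'_castSucc, ext'_castSucc] at h
      have := hnc' a b (Fin.castSucc_injective _ h)
      simpa using this

lemma ext'_fix (hle' : ∀ i, g' i ≤ i) :
    (Finset.univ.filter fun i => ext' g' v i = i).card =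
      (Finset.univ.filter fun w => g' w = w).card + (if v = Fin.last (k+1) then 1 else 0) := by
  rw [fix_split (ext'_le hle'), res_ext' g' hle', ext'_last]

end transfer

lemma A_rec (k d : ℕ) : A (k+2) (d+1) = A (k+1) d + d * A (k+1) (d+1) := by
  classical
  unfold A
  rw [← Finset.card_filter_add_card_filter_not
    (s := (Finset.univ : Finset (Fin (k+2) → Fin (k+2))).filter (Pd (k+2) (d+1)))
    (p := fun g => g (Fin.last (k+1)) = Fin.last (k+1))]
  congr 1
  · -- blocks where the last element is a singleton representative
    apply Finset.card_bij (fun g _ => res g)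
    · intro g hg
      simp only [Finset.mem_filter, Finset.mem_univ, true_and] at hg ⊢
      obtain ⟨⟨⟨hle, hid, hnc⟩, hcard⟩, hlast⟩ := hg
      refine ⟨⟨res_le hle, res_idem hle hid, res_nc hle hnc⟩, ?_⟩
      have := fix_split hle
      rw [hcard, if_pos hlast] at this
      omega
    · intro g hg h hh heq
      simp only [Finset.mem_filter, Finset.mem_univ, true_and] at hg hh
      obtain ⟨⟨⟨hleg, _, _⟩, _⟩, hlastg⟩ := hg
      obtain ⟨⟨⟨hleh, _, _⟩, _⟩, hlasth⟩ := hh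
      rw [← ext'_res hleg, ← ext'_res hleh, heq, hlastg, hlasth]
    · intro g' hg'
      simp only [Finset.mem_filter, Finset.mem_univ, true_and] at hg'
      obtain ⟨⟨hle', hid', hnc'⟩, hcard'⟩ := hg'
      refine ⟨ext' g' (Fin.last (k+1)), ?_, res_ext' g' hle' _⟩
      simp only [Finset.mem_filter, Finset.mem_univ, true_and]
      refine ⟨⟨⟨ext'_le hle', ext'_idem hid' (Or.inl rfl), ext'_nc hnc' (Or.inl rfl)⟩, ?_⟩,
        ext'_last _ _⟩
      rw [ext'_fix hle', if_pos rfl, hcard']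
  · -- blocks where the last element joins an earlier block
    rw [Finset.card_eq_sum_card_fiberwise (f := res)
      (t := (Finset.univ : Finset (Fin (k+1) → Fin (k+1))).filter (Pd (k+1) (d+1)))]
    · rw [Finset.sum_congr rfl (g := fun _ => d), Finset.sum_const, smul_eq_mul, mul_comm]
      intro g' hg'
      simp only [Finset.mem_filter, Finset.mem_univ, true_and] at hg'
      obtain ⟨⟨hle', hid', hnc'⟩, hcard'⟩ := hg'
      have hfixlast : g' (g' (Fin.last k)) = g' (Fin.last k) := hid' _
      have hmem : g' (Fin.last k) ∈ Finset.univ.filter fun w => g' w = w := by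
        simp [hfixlast]
      rw [show d = ((Finset.univ.filter fun w => g' w = w).erase (g' (Fin.last k))).card by
        rw [Finset.card_erase_of_mem hmem, hcard']
        omega]
      apply Finset.card_bij (fun g hg => (⟨(g (Fin.last (k+1)) : ℕ), by
        simp only [Finset.mem_filter, Finset.mem_univ, true_and] at hg
        obtain ⟨⟨⟨⟨hle, _, _⟩, _⟩, hlast⟩, _⟩ := hg
        have h1 : (g (Fin.last (k+1)) : ℕ) ≤ k + 1 := by simpa [Fin.le_def] using hle (Fin.last (k+1))
        have h2 : (g (Fin.last (k+1)) : ℕ) ≠ k + 1 := fun hc =>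
          hlast (Fin.ext (by simpa using hc))
        omega⟩ : Fin (k+1)))
      · intro g hg
        simp only [Finset.mem_filter, Finset.mem_univ, true_and] at hg
        obtain ⟨⟨⟨⟨hle, hid, hnc⟩, hcard⟩, hlast⟩, hres⟩ := hg
        rw [Finset.mem_erase]
        constructor
        · intro hc
          have hval : (g (Fin.last (k+1)) : ℕ) = (g ((Fin.last k).castSucc) : ℕ) := by
            have := congrArg Fin.val hc
            simp only [← hres] at this
            rw [res_val hle] at this
            simpa using this
          have : g (Fin.last (k+1)) = g ((Fin.last k).castSucc) := Fin.ext hval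
          exact hnc _ _ this.symm (by simp)
        · simp only [Finset.mem_filter, Finset.mem_univ, true_and, ← hres]
          have hcs : ∀ pf : ((g (Fin.last (k+1)) : ℕ) < k + 1),
              ((⟨(g (Fin.last (k+1)) : ℕ), pf⟩ : Fin (k+1)).castSucc) = g (Fin.last (k+1)) :=
            fun pf => Fin.ext (by simp)
          apply Fin.ext
          rw [res_val hle, hcs, hid]
      · intro g hg h hh heq
        simp only [Finset.mem_filter, Finset.mem_univ, true_and] at hg hh
        obtain ⟨⟨⟨⟨hleg, _, _⟩, _⟩, _⟩, hresg⟩ := hg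
        obtain ⟨⟨⟨⟨hleh, _, _⟩, _⟩, _⟩, hresh⟩ := hh
        have hlast : g (Fin.last (k+1)) = h (Fin.last (k+1)) := by
          have := congrArg Fin.val heq
          exact Fin.ext (by simpa using this)
        rw [← ext'_res hleg, ← ext'_res hleh, hresg, hresh, hlast]
      · intro v hv
        rw [Finset.mem_erase, Finset.mem_filter] at hv
        obtain ⟨hvne, _, hvfix⟩ := hv
        refine ⟨ext' g' v.castSucc, ?_, ?_⟩
        · simp only [Finset.mem_filter, Finset.mem_univ, true_and]
          refine ⟨⟨⟨⟨ext'_le hle', ext'_idem hid' (Or.inr ⟨v, rfl, hvfix⟩),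
            ext'_nc hnc' (Or.inr ⟨v, rfl, hvne⟩)⟩, ?_⟩, ?_⟩, res_ext' g' hle' _⟩
          · rw [ext'_fix hle', if_neg (Fin.castSucc_lt_last v).ne, hcard',
              Finset.card_erase_of_mem hmem, hcard']
            omega
          · rw [ext'_last]
            exact (Fin.castSucc_lt_last v).ne
        · apply Fin.ext
          show (ext' g' v.castSucc (Fin.last (k+1)) : ℕ) = (v : ℕ)
          rw [ext'_last]
          simp
    · intro g hg
      simp only [Finset.mem_coe, Finset.mem_filter, Finset.mem_univ, true_and] at hg ⊢
      obtain ⟨⟨⟨hle, hid, hnc⟩, hcard⟩, hlast⟩ := hg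
      refine ⟨⟨res_le hle, res_idem hle hid, res_nc hle hnc⟩, ?_⟩
      have := fix_split hle
      rw [hcard, if_neg hlast] at this
      omega

lemma A_one (d : ℕ) : A 1 d = if d = 1 then 1 else 0 := by
  unfold A
  have hpd : ∀ g : Fin 1 → Fin 1, Pd 1 d g ↔ d = 1 := by
    intro g
    unfold Pd
    have h1 : (Finset.univ.filter fun v => g v = v) = Finset.univ :=
      Finset.filter_true_of_mem (fun v _ => Subsingleton.elim _ _)
    constructor
    · rintro ⟨-, hc⟩
      rw [h1] at hc
      simpa using hc.symm
    · rintro rfl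
      refine ⟨⟨fun i => le_of_eq (Subsingleton.elim _ _), fun i => Subsingleton.elim _ _,
        fun i j h => ?_⟩, by rw [h1]; simp⟩
      have := j.isLt
      omega
  by_cases hd : d = 1
  · rw [if_pos hd, Finset.filter_true_of_mem (fun g _ => (hpd g).mpr hd)]
    decide
  · rw [if_neg hd, Finset.card_eq_zero, Finset.filter_eq_empty_iff]
    exact fun {g} _ hc => hd ((hpd g).mp hc)

lemma A_zero (m : ℕ) : A (m+1) 0 = 0 := by
  unfold A
  rw [Finset.card_eq_zero, Finset.filter_eq_empty_iff]
  rintro g - ⟨⟨hle, -, -⟩, hcard⟩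
  have h0 : g 0 = 0 := le_antisymm (by simpa using hle 0) (Fin.zero_le _)
  have : (0 : Fin (m+1)) ∈ Finset.univ.filter fun v => g v = v := by simp [h0]
  have := Finset.card_pos.mpr ⟨_, this⟩
  omega

lemma A_eq (n e : ℕ) : A (n+1) (e+1) = stirling2 n e := by
  induction n generalizing e with
  | zero =>
    rw [A_one]
    cases e with
    | zero => simp [stirling2]
    | succ e => simp [stirling2]
  | succ n ih =>
    rw [A_rec n e]
    cases e with
    | zero =>
      rw [A_zero]
      simp [stirling2]
    | succ e =>
      rw [ih, ih]
      simp [stirling2]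

/-- The number of set partitions of `{1,…,n+1}` into `d` blocks with no block
containing two consecutive integers equals `S(n, d-1)`. -/
theorem reduced_partition_count (n d : ℕ) (hd : 1 ≤ d) :
    Nat.card {P : Finpartition (Finset.univ : Finset (Fin (n + 1))) //
        P.parts.card = d ∧
        ∀ b ∈ P.parts, ∀ i j : Fin (n + 1), i ∈ b → j ∈ b → (j : ℕ) ≠ (i : ℕ) + 1} =
      stirling2 n (d - 1) := by
  obtain ⟨e, rfl⟩ : ∃ e, d = e + 1 := ⟨d - 1, by omega⟩
  rw [Nat.card_congr (stepA n (e+1)), card_RP, A_eq]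
  congr 1
end

section
/- For j ≥ 2 and n ≥ 1, the number of normal words of length j over an alphabet of size n satisfies Σ_{d=1}^{min(n,j)} (n!/(n-d)!) · S*(j,d) = n·(n-1)^{j-1}, where S*(j,d) is the number of set partitions of {1,...,j} into d blocks with no block containing consecutive integers. -/
/-- `Sstar n d` is the number of set partitions of `{1,…,n}` into `d` blocks
with no block containing two consecutive integers. -/
noncomputable def Sstar (n d : ℕ) : ℕ :=
  Nat.card {P : Finpartition (Finset.univ : Finset (Fin n)) //
    P.parts.card = d ∧
    ∀ b ∈ P.parts, ∀ i j : Fin n, i ∈ b → j ∈ b → (j : ℕ) ≠ (i : ℕ) + 1}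

namespace NWaux

open Finset

variable {j n : ℕ}

/-- A word is normal if no two consecutive letters agree. -/
def Normal (f : Fin j → Fin n) : Prop :=
  ∀ i k : Fin j, (k : ℕ) = (i : ℕ) + 1 → f i ≠ f k

instance : DecidablePred (Normal (j := j) (n := n)) := fun _ => by
  unfold Normal; infer_instance

/-- The kernel partition of a word. -/
def ker (f : Fin j → Fin n) : Finpartition (Finset.univ : Finset (Fin j)) :=
  letI : DecidableRel (Setoid.ker f).r := fun a b => decidable_of_iff (f a = f b) Iff.rfl
  Finpartition.ofSetoid (Setoid.ker f)

lemma mem_ker_iff {f : Fin j → Fin n} {b : Finset (Fin j)} (hb : b ∈ (ker f).parts)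
    {x : Fin j} (hx : x ∈ b) (k : Fin j) : k ∈ b ↔ f k = f x := by
  classical
  letI : DecidableRel (Setoid.ker f).r := fun a b => decidable_of_iff (f a = f b) Iff.rfl
  have hbx : b = (ker f).part x :=
    ((ker f).part_eq_of_mem hb hx).symm
  subst hbx
  rw [show (ker f).part x = (Finpartition.ofSetoid (Setoid.ker f)).part x from rfl,
    Finpartition.mem_part_ofSetoid_iff_rel]
  exact ⟨fun h => h.symm, fun h => h.symm⟩

def Good (P : Finpartition (Finset.univ : Finset (Fin j))) : Prop :=
  ∀ b ∈ P.parts, ∀ i k : Fin j, i ∈ b → k ∈ b → (k : ℕ) ≠ (i : ℕ) + 1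

instance : DecidablePred (Good (j := j)) := fun _ => by
  unfold Good; infer_instance

lemma good_ker_of_normal {f : Fin j → Fin n} (hf : Normal f) : Good (ker f) := by
  intro b hb i k hi hk hik
  exact hf i k hik ((mem_ker_iff hb hi k).1 hk).symm

lemma ker_part_apply (P : Finpartition (Finset.univ : Finset (Fin j)))
    (g : ↥P.parts ↪ Fin n) :
    ker (fun i => g ⟨P.part i, P.part_mem.2 (mem_univ i)⟩) = P := by
  classical
  set f : Fin j → Fin n := fun i => g ⟨P.part i, P.part_mem.2 (mem_univ i)⟩ with hfdef
  ext b
  constructor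
  · intro hb
    obtain ⟨x, hx⟩ := (ker f).nonempty_of_mem_parts hb
    have : b = P.part x := by
      ext k
      rw [mem_ker_iff hb hx k]
      constructor
      · intro hfk
        have : (⟨P.part k, P.part_mem.2 (mem_univ k)⟩ : ↥P.parts)
            = ⟨P.part x, P.part_mem.2 (mem_univ x)⟩ := g.injective hfk
        have hpp : P.part k = P.part x := congrArg Subtype.val this
        exact hpp ▸ P.mem_part (mem_univ k)
      · intro hk
        have hpp : P.part k = P.part x :=
          (P.mem_part_iff_part_eq_part (mem_univ k) (mem_univ x)).1 hk
        show g _ = g _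
        congr 1
        exact Subtype.ext hpp
    exact this ▸ P.part_mem.2 (mem_univ x)
  · intro hb
    obtain ⟨x, hx⟩ := P.nonempty_of_mem_parts hb
    have hbx : b = P.part x := (P.part_eq_of_mem hb hx).symm
    have hker : P.part x = (ker f).part x := by
      ext k
      have h1 := mem_ker_iff ((ker f).part_mem.2 (mem_univ x)) ((ker f).mem_part (mem_univ x)) k
      rw [h1]
      constructor
      · intro hk
        have hpp : P.part k = P.part x :=
          (P.mem_part_iff_part_eq_part (mem_univ k) (mem_univ x)).1 hk
        show g _ = g _
        congr 1
        exact Subtype.ext hpp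
      · intro hfk
        have : (⟨P.part k, P.part_mem.2 (mem_univ k)⟩ : ↥P.parts)
            = ⟨P.part x, P.part_mem.2 (mem_univ x)⟩ := g.injective hfk
        have hpp : P.part k = P.part x := congrArg Subtype.val this
        exact hpp ▸ P.mem_part (mem_univ k)
    rw [hbx, hker]
    exact (ker f).part_mem.2 (mem_univ x)

/-- The fiber of the kernel map over a good partition is equivalent to embeddings of
the parts into the alphabet. -/
noncomputable def fiberEquiv (P : Finpartition (Finset.univ : Finset (Fin j)))
    (hP : Good P) :
    {f : Fin j → Fin n // Normal f ∧ ker f = P} ≃ (↥P.parts ↪ Fin n) where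
  toFun f := ⟨fun b => f.1 (P.nonempty_of_mem_parts b.2).choose, by
    intro b1 b2 h
    have h1 : (P.nonempty_of_mem_parts b1.2).choose ∈ b1.1 :=
      (P.nonempty_of_mem_parts b1.2).choose_spec
    have h2 : (P.nonempty_of_mem_parts b2.2).choose ∈ b2.1 :=
      (P.nonempty_of_mem_parts b2.2).choose_spec
    have hb1 : b1.1 ∈ (ker f.1).parts := by rw [f.2.2]; exact b1.2
    have h' : f.1 (P.nonempty_of_mem_parts b2.2).choose
        = f.1 (P.nonempty_of_mem_parts b1.2).choose := h.symm
    have : (P.nonempty_of_mem_parts b2.2).choose ∈ b1.1 :=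
      (mem_ker_iff hb1 h1 _).2 h'
    exact Subtype.ext (P.eq_of_mem_parts b1.2 b2.2 this h2)⟩
  invFun g := ⟨fun i => g ⟨P.part i, P.part_mem.2 (mem_univ i)⟩, by
    constructor
    · intro i k hik hval
      have : (⟨P.part i, P.part_mem.2 (mem_univ i)⟩ : ↥P.parts)
          = ⟨P.part k, P.part_mem.2 (mem_univ k)⟩ := g.injective hval
      have hpp : P.part i = P.part k := congrArg Subtype.val this
      exact hP (P.part k) (P.part_mem.2 (mem_univ k)) i k
        (hpp ▸ P.mem_part (mem_univ i)) (P.mem_part (mem_univ k)) hik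
    · exact ker_part_apply P g⟩
  left_inv f := by
    apply Subtype.ext
    funext i
    have hpart : (ker f.1).part i ∈ (ker f.1).parts := (ker f.1).part_mem.2 (mem_univ i)
    have hPp : P.part i ∈ (ker f.1).parts := by rw [f.2.2]; exact P.part_mem.2 (mem_univ i)
    have hiP : i ∈ P.part i := P.mem_part (mem_univ i)
    have hchoose : (P.nonempty_of_mem_parts (P.part_mem.2 (mem_univ i))).choose ∈ P.part i :=
      (P.nonempty_of_mem_parts (P.part_mem.2 (mem_univ i))).choose_spec
    exact (mem_ker_iff hPp hiP _).1 hchoose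
  right_inv g := by
    apply DFunLike.ext
    intro b
    show g _ = g b
    congr 1
    apply Subtype.ext
    exact P.part_eq_of_mem b.2 (P.nonempty_of_mem_parts b.2).choose_spec

instance : DecidableEq (Finpartition (Finset.univ : Finset (Fin j))) := fun P Q =>
  decidable_of_iff (P.parts = Q.parts) ⟨fun h => Finpartition.ext h, fun h => by rw [h]⟩

/-- Counting the fiber of the kernel map. -/
lemma card_fiber (P : Finpartition (Finset.univ : Finset (Fin j))) (hP : Good P) :
    (univ.filter (fun f : Fin j → Fin n => Normal f ∧ ker f = P)).card
      = n.descFactorial P.parts.card := by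
  rw [← Fintype.card_subtype, Fintype.card_congr (fiberEquiv P hP),
    Fintype.card_embedding_eq, Fintype.card_coe, Fintype.card_fin]

/-- The equivalence describing extensions of a normal word by one letter. -/
def lastFiberEquiv (hj : 0 < j) (g : Fin j → Fin n) (hg : Normal g) :
    {f : Fin (j+1) → Fin n // Normal f ∧ (fun i : Fin j => f i.castSucc) = g}
      ≃ {x : Fin n // x ≠ g ⟨j - 1, by omega⟩} where
  toFun f := ⟨f.1 (Fin.last j), by
    have h1 := f.2.1 ⟨j - 1, by omega⟩ (Fin.last j) (by simp [Fin.last]; omega)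
    have h2 : g ⟨j - 1, by omega⟩ = f.1 (Fin.castSucc ⟨j - 1, by omega⟩) :=
      (congrFun f.2.2 ⟨j - 1, by omega⟩).symm
    have h3 : (Fin.castSucc (⟨j - 1, by omega⟩ : Fin j)) = (⟨j - 1, by omega⟩ : Fin (j+1)) :=
      rfl
    rw [h2, h3]
    exact fun h => h1 h.symm⟩
  invFun x := ⟨fun p => if h : (p : ℕ) < j then g ⟨p, h⟩ else x.1, by
    constructor
    · intro i k hk hval
      have hval' : (if h : (i : ℕ) < j then g ⟨i, h⟩ else x.1)
          = (if h : (k : ℕ) < j then g ⟨k, h⟩ else x.1) := hval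
      by_cases hklt : (k : ℕ) < j
      · have hilt : (i : ℕ) < j := by omega
        rw [dif_pos hilt, dif_pos hklt] at hval'
        exact hg ⟨i, hilt⟩ ⟨k, hklt⟩ hk hval'
      · have hilt : (i : ℕ) < j := by have := k.2; omega
        rw [dif_pos hilt, dif_neg hklt] at hval'
        have hieq : (⟨i, hilt⟩ : Fin j) = ⟨j - 1, by omega⟩ := by
          apply Fin.ext; simp only []; have := k.2; omega
        rw [hieq] at hval'
        exact x.2 hval'.symm
    · funext i
      show (if h : ((Fin.castSucc i : Fin (j+1)) : ℕ) < j
          then g ⟨((Fin.castSucc i : Fin (j+1)) : ℕ), h⟩ else x.1) = g i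
      have hlt : ((Fin.castSucc i : Fin (j+1)) : ℕ) < j := by simp
      rw [dif_pos hlt]
      exact congrArg g (Fin.ext (by simp))⟩
  left_inv f := by
    apply Subtype.ext
    funext p
    show (if h : (p : ℕ) < j then g ⟨p, h⟩ else f.1 (Fin.last j)) = f.1 p
    by_cases hp : (p : ℕ) < j
    · rw [dif_pos hp]
      have h2 : g ⟨p, hp⟩ = f.1 (Fin.castSucc ⟨p, hp⟩) := (congrFun f.2.2 ⟨p, hp⟩).symm
      rw [h2]
      congr 1
    · rw [dif_neg hp]
      have hp' : p = Fin.last j := Fin.ext (by have := p.2; show (p : ℕ) = j; omega)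
      rw [hp']
  right_inv x := by
    apply Subtype.ext
    show (if h : ((Fin.last j : Fin (j+1)) : ℕ) < j then g ⟨_, h⟩ else x.1) = x.1
    have : ¬ ((Fin.last j : ℕ) < j) := by simp
    rw [dif_neg this]

lemma card_normal_succ (hn : 1 ≤ n) (hj : 0 < j) :
    (univ.filter (Normal (j := j+1) (n := n))).card
      = (univ.filter (Normal (j := j) (n := n))).card * (n - 1) := by
  have H : ∀ f ∈ univ.filter (Normal (j := j+1) (n := n)),
      (fun i : Fin j => f i.castSucc) ∈ univ.filter (Normal (j := j) (n := n)) := by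
    intro f hf
    simp only [mem_filter, mem_univ, true_and] at hf ⊢
    intro i k hk
    exact hf i.castSucc k.castSucc (by simpa using hk)
  rw [Finset.card_eq_sum_card_fiberwise H]
  have hfib : ∀ g ∈ univ.filter (Normal (j := j) (n := n)),
      ((univ.filter (Normal (j := j+1) (n := n))).filter
        (fun f => (fun i : Fin j => f i.castSucc) = g)).card = n - 1 := by
    intro g hg
    simp only [mem_filter, mem_univ, true_and] at hg
    rw [Finset.filter_filter, ← Fintype.card_subtype,
      Fintype.card_congr (lastFiberEquiv hj g hg)]
    rw [Fintype.card_subtype_compl, Fintype.card_subtype_eq, Fintype.card_fin]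
  rw [Finset.sum_congr rfl hfib, Finset.sum_const, smul_eq_mul]

lemma card_normal (n : ℕ) : ∀ j : ℕ, 1 ≤ j →
    (univ.filter (Normal (j := j) (n := n))).card = n * (n - 1) ^ (j - 1) := by
  intro j hj
  induction j, hj using Nat.le_induction with
  | base =>
    have hall : ∀ f : Fin 1 → Fin n, Normal f := by
      intro f i k hk
      have := k.2; have := i.2; omega
    rw [Finset.filter_true_of_mem (fun f _ => hall f), Finset.card_univ, Fintype.card_fun,
      Fintype.card_fin, Fintype.card_fin]
    simp
  | succ m hm ih =>
    by_cases hn : 1 ≤ n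
    · rw [card_normal_succ hn hm, ih]
      have : m + 1 - 1 = (m - 1) + 1 := by omega
      rw [this, pow_succ, mul_assoc]
    · interval_cases n
      have hempty : univ.filter (Normal (j := m+1) (n := 0)) = ∅ := by
        apply Finset.filter_false_of_mem
        intro f _ _
        exact (f ⟨0, by omega⟩).elim0
      rw [hempty]
      simp

lemma card_eq_sum (hj : 2 ≤ j) :
    (univ.filter (Normal (j := j) (n := n))).card
      = ∑ d ∈ Finset.Icc 1 (min n j), n.descFactorial d * Sstar j d := by
  have H : ∀ f ∈ univ.filter (Normal (j := j) (n := n)),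
      ker f ∈ univ.filter (Good (j := j)) := by
    intro f hf
    simp only [mem_filter, mem_univ, true_and] at hf ⊢
    exact good_ker_of_normal hf
  rw [Finset.card_eq_sum_card_fiberwise H]
  have step1 : ∀ P ∈ univ.filter (Good (j := j)),
      ((univ.filter (Normal (j := j) (n := n))).filter (fun f => ker f = P)).card
        = n.descFactorial P.parts.card := by
    intro P hP
    simp only [mem_filter, mem_univ, true_and] at hP
    rw [Finset.filter_filter]
    exact card_fiber P hP
  rw [Finset.sum_congr rfl step1]
  have hmap : ∀ P ∈ univ.filter (Good (j := j)), P.parts.card ∈ Finset.Icc 1 j := by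
    intro P _
    rw [Finset.mem_Icc]
    constructor
    · rw [Nat.succ_le_iff, Finset.card_pos]
      apply P.parts_nonempty
      rw [Finset.bot_eq_empty, ← Finset.nonempty_iff_ne_empty]
      exact ⟨⟨0, by omega⟩, mem_univ _⟩
    · have := P.card_parts_le_card
      rwa [Finset.card_univ, Fintype.card_fin] at this
  rw [← Finset.sum_fiberwise_of_maps_to hmap (fun P => n.descFactorial P.parts.card)]
  have step2 : ∀ d ∈ Finset.Icc 1 j,
      ∑ P ∈ (univ.filter (Good (j := j))).filter (fun P => P.parts.card = d),
        n.descFactorial P.parts.card = n.descFactorial d * Sstar j d := by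
    intro d _
    rw [Finset.sum_congr rfl (fun P hP => by
      rw [(Finset.mem_filter.1 hP).2]), Finset.sum_const, smul_eq_mul, mul_comm]
    congr 1
    have : Sstar j d = (univ.filter (fun P : Finpartition (Finset.univ : Finset (Fin j)) =>
        P.parts.card = d ∧ Good P)).card := by
      rw [Sstar, Nat.card_eq_fintype_card, Fintype.card_subtype]
      apply congrArg
      apply Finset.filter_congr
      intro x _
      unfold Good
      exact Iff.rfl
    rw [this, Finset.filter_filter]
    apply congrArg
    apply Finset.filter_congr
    intro x _
    exact and_comm
  rw [Finset.sum_congr rfl step2]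
  apply (Finset.sum_subset (Finset.Icc_subset_Icc_right (min_le_right n j)) ?_).symm
  intro x hx hx'
  rw [Finset.mem_Icc] at hx
  have : n < x := by
    rw [Finset.mem_Icc] at hx'
    omega
  rw [Nat.descFactorial_eq_zero_iff_lt.2 this, zero_mul]

end NWaux

/-- For `j ≥ 2` and `n ≥ 1`, counting normal words of length `j` over an
`n`-letter alphabet: `Σ_{d=1}^{min(n,j)} (n!/(n-d)!) · S*(j,d) = n(n-1)^{j-1}`. -/
theorem normal_words_via_reduced_stirling (n j : ℕ) (hj : 2 ≤ j) (hn : 1 ≤ n) :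
    ∑ d ∈ Finset.Icc 1 (min n j), n.descFactorial d * Sstar j d =
      n * (n - 1) ^ (j - 1) := by
  exact (NWaux.card_eq_sum hj).symm.trans (NWaux.card_normal n j (by omega))
end

section
/- In the poset A*_{n,k} of words of length at most k over an n-letter alphabet ordered by subword order, with a bottom element (the empty word) and an artificially appended top element 1̂, the Möbius function satisfies μ(β, 1̂)·(-1)^{k+1-|β|} = C(k,|β|)·(n-1)^{k-|β|} for every word β of length at most k. In particular this value depends only on the length of β. -/
open scoped Classical

/-- Words of length at most `k` over an alphabet of size `n`, encoded as a
length `i ≤ k` together with a function `Fin i → Fin n`. -/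
abbrev Word (n k : ℕ) := Σ i : Fin (k + 1), Fin i → Fin n

/-- Subword order: `u ≤ v` iff `u` is obtained from `v` by deleting letters,
i.e. there is a strictly increasing embedding of positions. -/
def wordLE {n k : ℕ} (u v : Word n k) : Prop :=
  ∃ f : Fin u.1 → Fin v.1, StrictMono f ∧ ∀ j, u.2 j = v.2 (f j)

/-- The order on `A*_{n,k}` with an artificial top element `⊤ = none`. -/
def wordLE' {n k : ℕ} : Option (Word n k) → Option (Word n k) → Prop
  | _, none => True
  | none, some _ => False
  | some u, some v => wordLE u v

/-- `T n m j = ∑_{i=j}^m C(m,i) (n-1)^{m-i}`, the number of length-`m` superwords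
of a fixed length-`j` word over an `n`-letter alphabet. -/
def Tc (n m j : ℕ) : ℤ := ∑ i ∈ Finset.Icc j m, (m.choose i : ℤ) * ((n : ℤ) - 1) ^ (m - i)

lemma Tc_self (n j : ℕ) : Tc n j j = 1 := by simp [Tc]

lemma Tc_zero (n m j : ℕ) (h : m < j) : Tc n m j = 0 := by
  rw [Tc, Finset.Icc_eq_empty (by omega), Finset.sum_empty]

lemma Tc_len_zero (n m : ℕ) : Tc n m 0 = (n : ℤ) ^ m := by
  have h := add_pow (1 : ℤ) ((n : ℤ) - 1) m
  simp only [one_pow, one_mul, add_sub_cancel] at h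
  rw [Tc, h]
  rw [← Finset.Ico_add_one_right_eq_Icc, Finset.range_eq_Ico]
  exact Finset.sum_congr rfl fun i hi => by ring

lemma Tc_rec (n m j : ℕ) : Tc n (m + 1) (j + 1) = ((n : ℤ) - 1) * Tc n m (j + 1) + Tc n m j := by
  classical
  rcases le_or_gt (j+1) (m+1) with h | h
  · -- expand
    have expand : Tc n (m+1) (j+1)
        = ∑ i ∈ Finset.Icc (j+1) (m+1), ((m.choose i : ℤ) * ((n:ℤ)-1) ^ (m+1-i) + (m.choose (i-1) : ℤ) * ((n:ℤ)-1) ^ (m+1-i)) := by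
      refine Finset.sum_congr rfl fun i hi => ?_
      simp only [Finset.mem_Icc] at hi
      obtain ⟨i, rfl⟩ : ∃ i', i = i' + 1 := ⟨i - 1, by omega⟩
      rw [Nat.choose_succ_succ', Nat.add_sub_cancel]
      push_cast
      ring
    rw [expand]
    rw [Finset.sum_add_distrib]
    congr 1
    · -- first sum: (n-1) * Tc n m (j+1); note choose m (m+1) = 0
      rw [Tc, Finset.mul_sum]
      rw [show Finset.Icc (j+1) (m+1) = insert (m+1) (Finset.Icc (j+1) m) by
        ext i
        simp only [Finset.mem_Icc, Finset.mem_insert]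
        omega]
      rw [Finset.sum_insert (by simp)]
      simp only [Nat.choose_succ_self, Nat.cast_zero, zero_mul, zero_add]
      refine Finset.sum_congr rfl fun i hi => ?_
      simp only [Finset.mem_Icc] at hi
      rw [show m + 1 - i = (m - i) + 1 by omega]
      ring
    · -- second sum: reindex i ↦ i - 1
      rw [Tc]
      rw [show Finset.Icc (j+1) (m+1) = Finset.map ⟨fun i => i + 1, add_left_injective 1⟩ (Finset.Icc j m) by
        ext i
        simp only [Finset.mem_map, Finset.mem_Icc, Function.Embedding.coeFn_mk]
        constructor
        · intro hi; exact ⟨i - 1, by omega, by omega⟩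
        · rintro ⟨a, ha, rfl⟩; omega]
      rw [Finset.sum_map]
      refine Finset.sum_congr rfl fun i hi => ?_
      simp only [Finset.mem_Icc] at hi
      simp only [Function.Embedding.coeFn_mk, Nat.add_sub_cancel]
      rw [show m + 1 - (i+1) = m - i by omega]
  · rw [Tc_zero n (m+1) (j+1) h, Tc_zero n m (j+1) (by omega), Tc_zero n m j (by omega)]
    ring

/-- alternating sum with shifted sign -/
lemma alt_sum (s : ℕ) :
    ∑ t ∈ Finset.range (s+1), ((-1:ℤ))^(s-t) * ((s.choose t : ℤ)) = if s = 0 then 1 else 0 := by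
  have h : ∀ t ∈ Finset.range (s+1), ((-1:ℤ))^(s-t) * ((s.choose t : ℤ))
      = (-1:ℤ)^s * ((-1)^t * (s.choose t : ℤ)) := by
    intro t ht
    simp only [Finset.mem_range] at ht
    have : ((-1:ℤ))^(s-t) = (-1:ℤ)^s * (-1)^t := by
      rw [← pow_add, show s + t = (s - t) + 2 * t by omega, pow_add, pow_mul]
      simp
    rw [this]; ring
  rw [Finset.sum_congr rfl h, ← Finset.mul_sum, Int.alternating_sum_range_choose]
  rcases Nat.eq_zero_or_pos s with rfl | hs
  · simp
  · simp [Nat.pos_iff_ne_zero.mp hs]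

lemma key_identity (n k j : ℕ) (hj : j ≤ k) :
    ∑ m ∈ Finset.range (k+1),
      Tc n m j * ((-1:ℤ)^(k+1-m) * (k.choose m : ℤ) * ((n:ℤ)-1)^(k-m)) = -1 := by
  set z : ℤ := (n:ℤ) - 1 with hz
  rw [← Finset.sum_subset (s₁ := Finset.Icc j k)
      (by intro m hm; simp only [Finset.mem_Icc, Finset.mem_range] at *; omega)
      (by intro m hm hm'
          simp only [Finset.mem_Icc, Finset.mem_range] at hm hm'
          rw [Tc_zero n m j (by omega), zero_mul])]
  have expand : ∀ m ∈ Finset.Icc j k,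
      Tc n m j * ((-1:ℤ)^(k+1-m) * (k.choose m : ℤ) * z^(k-m))
      = ∑ i ∈ Finset.Icc j m,
          ((m.choose i : ℤ) * z^(m-i)) * ((-1:ℤ)^(k+1-m) * (k.choose m : ℤ) * z^(k-m)) := by
    intro m hm
    rw [Tc, Finset.sum_mul]
  rw [Finset.sum_congr rfl expand]
  rw [Finset.sum_comm' (t' := Finset.Icc j k) (s' := fun i => Finset.Icc i k)
      (by intro m i; simp only [Finset.mem_Icc]; omega)]
  have inner : ∀ i ∈ Finset.Icc j k,
      ∑ m ∈ Finset.Icc i k,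
        ((m.choose i : ℤ) * z^(m-i)) * ((-1:ℤ)^(k+1-m) * (k.choose m : ℤ) * z^(k-m))
      = if i = k then -1 else 0 := by
    intro i hi
    simp only [Finset.mem_Icc] at hi
    have step : ∀ m ∈ Finset.Icc i k,
        ((m.choose i : ℤ) * z^(m-i)) * ((-1:ℤ)^(k+1-m) * (k.choose m : ℤ) * z^(k-m))
        = -((k.choose i : ℤ) * z^(k-i)) * ((-1:ℤ)^(k-m) * (((k-i).choose (m-i) : ℤ))) := by
      intro m hm
      simp only [Finset.mem_Icc] at hm
      have hcc : (k.choose m : ℤ) * (m.choose i : ℤ)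
          = (k.choose i : ℤ) * (((k-i).choose (m-i) : ℤ)) := by
        exact_mod_cast congrArg (Nat.cast (R := ℤ)) (Nat.choose_mul (n := k) hm.1)
      have hzz : z^(m-i) * z^(k-m) = z^(k-i) := by
        rw [← pow_add]; congr 1; omega
      have hsign : ((-1:ℤ))^(k+1-m) = -(-1:ℤ)^(k-m) := by
        rw [show k+1-m = (k-m)+1 by omega, pow_succ]; ring
      calc ((m.choose i : ℤ) * z^(m-i)) * ((-1:ℤ)^(k+1-m) * (k.choose m : ℤ) * z^(k-m))
          = ((k.choose m : ℤ) * (m.choose i : ℤ)) * (z^(m-i) * z^(k-m)) * (-1:ℤ)^(k+1-m) := by ring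
        _ = ((k.choose i : ℤ) * (((k-i).choose (m-i) : ℤ))) * z^(k-i) * (-(-1:ℤ)^(k-m)) := by
            rw [hcc, hzz, hsign]
        _ = -((k.choose i : ℤ) * z^(k-i)) * ((-1:ℤ)^(k-m) * (((k-i).choose (m-i) : ℤ))) := by ring
    rw [Finset.sum_congr rfl step, ← Finset.mul_sum]
    have reindex : Finset.Icc i k
        = Finset.map ⟨fun t => i + t, add_right_injective i⟩ (Finset.range (k-i+1)) := by
      ext m
      simp only [Finset.mem_map, Finset.mem_Icc, Finset.mem_range, Function.Embedding.coeFn_mk]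
      constructor
      · intro hm; exact ⟨m - i, by omega, by omega⟩
      · rintro ⟨t, ht, rfl⟩; omega
    rw [reindex, Finset.sum_map]
    simp only [Function.Embedding.coeFn_mk, Nat.add_sub_cancel_left]
    have : ∀ t ∈ Finset.range (k-i+1),
        ((-1:ℤ))^(k-(i+t)) * (((k-i).choose t : ℤ)) = ((-1:ℤ))^((k-i)-t) * (((k-i).choose t : ℤ)) := by
      intro t ht; rw [show k - (i+t) = (k-i)-t by omega]
    rw [Finset.sum_congr rfl this, alt_sum (k-i)]
    rcases eq_or_ne i k with rfl | hik
    · simp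
    · rw [if_neg (by omega), if_neg hik, mul_zero]
  rw [Finset.sum_congr rfl inner, Finset.sum_ite_eq' (Finset.Icc j k) k (fun _ => (-1:ℤ))]
  rw [if_pos (by simp [hj])]

noncomputable def allLists (n : ℕ) : ℕ → Finset (List (Fin n))
  | 0 => {[]}
  | m+1 => (Finset.univ ×ˢ allLists n m).image fun p => p.1 :: p.2

lemma mem_allLists (n m : ℕ) (l : List (Fin n)) : l ∈ allLists n m ↔ l.length = m := by
  induction m generalizing l with
  | zero => simp [allLists, List.length_eq_zero_iff]
  | succ m ih =>
    simp only [allLists, Finset.mem_image, Finset.mem_product, Finset.mem_univ, true_and,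
      Prod.exists]
    constructor
    · rintro ⟨a, w, hw, rfl⟩; simp [ih w |>.mp hw]
    · intro hl
      match l, hl with
      | a :: w, hl => exact ⟨a, w, (ih w).mpr (by simpa using hl), rfl⟩

lemma sublist_cons_of_ne {n : ℕ} {y a : Fin n} {x w : List (Fin n)} (hne : y ≠ a) :
    (y :: x).Sublist (a :: w) ↔ (y :: x).Sublist w := by
  constructor
  · intro h
    cases h with
    | cons _ h => exact h
    | cons_cons => exact absurd rfl hne
  · exact fun h => h.cons a

lemma count_superlists (n : ℕ) : ∀ (m : ℕ) (x : List (Fin n)),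
    (((allLists n m).filter (fun w => x.Sublist w)).card : ℤ) = Tc n m x.length := by
  intro m
  induction m with
  | zero =>
    intro x
    match x with
    | [] => simp [allLists, Tc_self]
    | y :: x' =>
      rw [Tc_zero n 0 (y::x').length (by simp)]
      rw [show ((allLists n 0).filter (fun w => (y::x').Sublist w)) = ∅ by
        rw [Finset.filter_eq_empty_iff]
        intro w hw
        rw [mem_allLists] at hw
        intro hsub
        have := hsub.length_le
        simp [hw] at this]
      simp
  | succ m ih =>
    intro x
    match x with
    | [] =>
      rw [List.length_nil, Tc_len_zero]
      have : (allLists n (m+1)).filter (fun w => [].Sublist w) = allLists n (m+1) := by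
        apply Finset.filter_true_of_mem; intro w _; exact List.nil_sublist w
      rw [this]
      -- card (allLists n (m+1)) = n^(m+1)
      have hcard : ∀ m', (allLists n m').card = n ^ m' := by
        intro m'
        induction m' with
        | zero => simp [allLists]
        | succ m' ih' =>
          rw [allLists, Finset.card_image_of_injective _ (by
            intro p q h
            simpa [Prod.ext_iff] using h)]
          rw [Finset.card_product, ih']
          simp [pow_succ]
          ring
      rw [hcard]; push_cast; ring
    | y :: x' =>
      -- filter over image
      have hinj : Function.Injective (fun p : Fin n × List (Fin n) => p.1 :: p.2) := by
        intro p q h; simpa [Prod.ext_iff] using h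
      rw [allLists, Finset.filter_image,
        Finset.card_image_of_injective _ hinj]
      rw [Finset.card_filter]
      rw [Finset.sum_product]
      push_cast
      have hsteps : ∀ a : Fin n,
          (∑ w ∈ allLists n m, (if (y::x').Sublist (a :: w) then (1:ℤ) else 0))
          = if a = y then Tc n m x'.length else Tc n m (x'.length + 1) := by
        intro a
        rcases eq_or_ne a y with rfl | hay
        · rw [if_pos rfl, ← ih x', Finset.card_filter]
          push_cast
          refine Finset.sum_congr rfl fun w hw => ?_
          simp only [List.cons_sublist_cons]
        · have h2 := ih (y :: x')
          simp only [List.length_cons] at h2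
          rw [if_neg hay, ← h2, Finset.card_filter]
          push_cast
          refine Finset.sum_congr rfl fun w hw => ?_
          simp only [sublist_cons_of_ne (Ne.symm hay)]
      rw [Finset.sum_congr rfl (fun a _ => hsteps a)]
      have : ∀ a : Fin n,
          (if a = y then Tc n m x'.length else Tc n m (x'.length + 1))
          = Tc n m (x'.length + 1)
            + (if a = y then Tc n m x'.length - Tc n m (x'.length + 1) else 0) := by
        intro a
        rcases eq_or_ne a y with rfl | h
        · simp
        · simp [h]
      rw [Finset.sum_congr rfl (fun a _ => this a), Finset.sum_add_distrib,
        Finset.sum_const, Finset.sum_ite_eq' Finset.univ y, if_pos (Finset.mem_univ y)]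
      simp only [Finset.card_univ, Fintype.card_fin, List.length_cons]
      rw [Tc_rec]
      ring

variable {n k : ℕ}

/-- The list of letters of a word. -/
def toL (u : Word n k) : List (Fin n) := List.ofFn u.2

lemma length_toL (u : Word n k) : (toL u).length = u.1 := List.length_ofFn

lemma wordLE_iff (u v : Word n k) : wordLE u v ↔ (toL u).Sublist (toL v) := by
  rw [List.sublist_iff_exists_fin_orderEmbedding_get_eq]
  constructor
  · rintro ⟨f, hmono, hval⟩
    refine ⟨OrderEmbedding.ofStrictMono
      (fun i => Fin.cast (length_toL v).symm (f (Fin.cast (length_toL u) i))) ?_, ?_⟩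
    · intro a b hab
      simp only [Fin.lt_def, Fin.coe_cast]
      exact hmono (show Fin.cast (length_toL u) a < Fin.cast (length_toL u) b from hab)
    · intro i
      simp only [OrderEmbedding.coe_ofStrictMono, List.get_eq_getElem]
      simp only [toL, List.getElem_ofFn]
      rw [hval]
      refine congrArg v.snd (Fin.ext ?_)
      rfl
  · rintro ⟨f, hval⟩
    refine ⟨fun i => Fin.cast (length_toL v) (f (Fin.cast (length_toL u).symm i)), ?_, ?_⟩
    · intro a b hab
      simp only [Fin.lt_def, Fin.coe_cast]
      exact f.strictMono (show Fin.cast (length_toL u).symm a < Fin.cast (length_toL u).symm b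
        from hab)
    · intro i
      have h2 := hval (Fin.cast (length_toL u).symm i)
      simp only [toL, List.get_ofFn] at h2
      convert h2 using 2 <;> rfl

lemma toL_injective : Function.Injective (toL (n := n) (k := k)) := by
  rintro ⟨i, f⟩ ⟨j, g⟩ h
  have hlen : (i : ℕ) = (j : ℕ) := by
    have h1 := congrArg List.length h
    rwa [length_toL, length_toL] at h1
  have hij : i = j := Fin.ext hlen
  subst hij
  have : f = g := List.ofFn_injective h
  rw [this]

lemma wordLE_refl (u : Word n k) : wordLE u u := (wordLE_iff u u).mpr (List.Sublist.refl _)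

lemma wordLE_trans {u v w : Word n k} (h1 : wordLE u v) (h2 : wordLE v w) : wordLE u w :=
  (wordLE_iff u w).mpr (((wordLE_iff u v).mp h1).trans ((wordLE_iff v w).mp h2))

lemma wordLE_antisymm {u v : Word n k} (h1 : wordLE u v) (h2 : wordLE v u) : u = v :=
  toL_injective (((wordLE_iff u v).mp h1).antisymm ((wordLE_iff v u).mp h2))

lemma wordLE_len_lt {u v : Word n k} (h1 : wordLE u v) (h2 : u ≠ v) : (u.1 : ℕ) < (v.1 : ℕ) := by
  have hs := (wordLE_iff u v).mp h1
  have hle := hs.length_le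
  rw [length_toL, length_toL] at hle
  rcases lt_or_eq_of_le hle with h | h
  · exact h
  · exact absurd (toL_injective (hs.eq_of_length (by rw [length_toL, length_toL]; exact h)))
      h2

lemma wordLE'_refl (x : Option (Word n k)) : wordLE' x x := by
  cases x with
  | none => trivial
  | some u => exact wordLE_refl u

lemma wordLE'_trans {x y z : Option (Word n k)} (h1 : wordLE' x y) (h2 : wordLE' y z) :
    wordLE' x z := by
  cases x <;> cases y <;> cases z <;> first
    | trivial
    | exact (h1 : False).elim
    | exact (h2 : False).elim
    | exact wordLE_trans h1 h2

lemma wordLE'_antisymm {x y : Option (Word n k)} (h1 : wordLE' x y) (h2 : wordLE' y x) :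
    x = y := by
  cases x <;> cases y
  · rfl
  · exact (h1 : False).elim
  · exact (h2 : False).elim
  · exact congrArg some (wordLE_antisymm h1 h2)

/-- Dual Möbius recurrence via matrix inverses. -/
lemma dual_rec (μ : Option (Word n k) → Option (Word n k) → ℤ)
    (hrefl : ∀ x, μ x x = 1)
    (hrec : ∀ x y : Option (Word n k), wordLE' x y → x ≠ y →
      ∑ z ∈ Finset.univ.filter (fun z => wordLE' x z ∧ wordLE' z y), μ x z = 0)
    (x y : Option (Word n k)) (hxy : wordLE' x y) (hne : x ≠ y) :
    ∑ z ∈ Finset.univ.filter (fun z => wordLE' x z ∧ wordLE' z y), μ z y = 0 := by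
  set A : Matrix (Option (Word n k)) (Option (Word n k)) ℤ :=
    fun a b => if wordLE' a b then μ a b else 0 with hA
  set B : Matrix (Option (Word n k)) (Option (Word n k)) ℤ :=
    fun a b => if wordLE' a b then 1 else 0 with hB
  have entry : ∀ a b : Option (Word n k), (A * B) a b
      = ∑ z ∈ Finset.univ.filter (fun z => wordLE' a z ∧ wordLE' z b), μ a z := by
    intro a b
    rw [Matrix.mul_apply, Finset.sum_filter]
    refine Finset.sum_congr rfl fun z _ => ?_
    by_cases h1 : wordLE' a z <;> by_cases h2 : wordLE' z b <;>
      simp [hA, hB, h1, h2]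
  have hAB : A * B = 1 := by
    apply Matrix.ext
    intro a b
    rw [entry, Matrix.one_apply]
    rcases eq_or_ne a b with heq | hab
    · subst heq
      rw [if_pos rfl]
      have hsingle : Finset.univ.filter (fun z => wordLE' a z ∧ wordLE' z a) = {a} := by
        ext z
        simp only [Finset.mem_filter, Finset.mem_univ, true_and, Finset.mem_singleton]
        constructor
        · rintro ⟨h1, h2⟩; exact (wordLE'_antisymm h2 h1)
        · rintro rfl; exact ⟨wordLE'_refl z, wordLE'_refl z⟩
      rw [hsingle, Finset.sum_singleton, hrefl]
    · rw [if_neg hab]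
      by_cases hle : wordLE' a b
      · exact hrec a b hle hab
      · rw [Finset.filter_false_of_mem, Finset.sum_empty]
        rintro z _ ⟨h1, h2⟩
        exact hle (wordLE'_trans h1 h2)
  have hBA : B * A = 1 := mul_eq_one_comm.mp hAB
  have entry2 : (B * A) x y
      = ∑ z ∈ Finset.univ.filter (fun z => wordLE' x z ∧ wordLE' z y), μ z y := by
    rw [Matrix.mul_apply, Finset.sum_filter]
    refine Finset.sum_congr rfl fun z _ => ?_
    by_cases h1 : wordLE' x z <;> by_cases h2 : wordLE' z y <;>
      simp [hA, hB, h1, h2]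
  rw [← entry2, hBA, Matrix.one_apply, if_neg hne]

/-- number of superwords of `x` of length `m` -/
lemma card_superwords (x : Word n k) (m : ℕ) (hm : m ≤ k) :
    ((Finset.univ.filter (fun w : Word n k => wordLE x w ∧ (w.1 : ℕ) = m)).card : ℤ)
      = Tc n m (x.1 : ℕ) := by
  rw [← length_toL x, ← count_superlists n m (toL x)]
  congr 1
  apply Finset.card_bij (fun w _ => toL w)
  · intro w hw
    simp only [Finset.mem_filter, Finset.mem_univ, true_and] at hw ⊢
    exact ⟨(mem_allLists n m (toL w)).mpr (by rw [length_toL]; exact hw.2),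
      (wordLE_iff x w).mp hw.1⟩
  · intro w1 h1 w2 h2 h
    exact toL_injective h
  · intro l hl
    simp only [Finset.mem_filter] at hl
    obtain ⟨hl1, hl2⟩ := hl
    rw [mem_allLists] at hl1
    refine ⟨⟨⟨m, by omega⟩, fun i => l.get (Fin.cast hl1.symm i)⟩, ?_, ?_⟩
    · simp only [Finset.mem_filter, Finset.mem_univ, true_and]
      constructor
      · rw [wordLE_iff]
        have : toL (⟨⟨m, by omega⟩, fun i => l.get (Fin.cast hl1.symm i)⟩ : Word n k) = l := by
          subst hl1
          exact List.ofFn_get l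
        rw [this]
        exact hl2
      · trivial
    · subst hl1
      exact List.ofFn_get l

/-- the target value -/
noncomputable def Fv (n k m : ℕ) : ℤ := (-1:ℤ)^(k+1-m) * (k.choose m : ℤ) * ((n:ℤ)-1)^(k-m)

lemma sum_Fv (x : Word n k) :
    ∑ w ∈ Finset.univ.filter (fun w : Word n k => wordLE x w), Fv n k (w.1 : ℕ) = -1 := by
  rw [← Finset.sum_fiberwise_of_maps_to (g := fun w : Word n k => (w.1 : ℕ))
      (t := Finset.range (k+1)) (fun w _ => Finset.mem_range.mpr w.1.isLt)]
  rw [← key_identity n k (x.1 : ℕ) (by omega)]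
  refine Finset.sum_congr rfl fun m hm => ?_
  simp only [Finset.mem_range] at hm
  have hfib : (Finset.univ.filter (fun w : Word n k => wordLE x w)).filter
        (fun w => (w.1 : ℕ) = m)
      = Finset.univ.filter (fun w : Word n k => wordLE x w ∧ (w.1 : ℕ) = m) := by
    ext w; simp [and_assoc]
  rw [hfib]
  have hconst : ∀ w ∈ Finset.univ.filter (fun w : Word n k => wordLE x w ∧ (w.1 : ℕ) = m),
      Fv n k (w.1 : ℕ) = Fv n k m := by
    intro w hw
    simp only [Finset.mem_filter] at hw
    rw [hw.2.2]
  rw [Finset.sum_congr rfl hconst, Finset.sum_const, nsmul_eq_mul,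
    card_superwords x m (by omega)]
  rfl

theorem mu_formula (μ : Option (Word n k) → Option (Word n k) → ℤ)
    (hrefl : ∀ x, μ x x = 1)
    (hrec : ∀ x y : Option (Word n k), wordLE' x y → x ≠ y →
      ∑ z ∈ Finset.univ.filter (fun z => wordLE' x z ∧ wordLE' z y), μ x z = 0)
    (x : Word n k) : μ (some x) none = Fv n k (x.1 : ℕ) := by
  have main : ∀ d, ∀ x : Word n k, k - (x.1 : ℕ) = d → μ (some x) none = Fv n k (x.1 : ℕ) := by
    intro d
    induction d using Nat.strong_induction_on with
    | _ d IH =>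
      intro x hd
      have hdual := dual_rec μ hrefl hrec (some x) none trivial (by simp)
      have hset : Finset.univ.filter
            (fun z : Option (Word n k) => wordLE' (some x) z ∧ wordLE' z none)
          = insert none ((Finset.univ.filter (fun w : Word n k => wordLE x w)).image some) := by
        ext z
        cases z with
        | none => simp [wordLE']
        | some w =>
          simp only [Finset.mem_filter, Finset.mem_univ, true_and, Finset.mem_insert,
            Finset.mem_image]
          simp only [wordLE']
          constructor
          · rintro ⟨h1, -⟩; exact Or.inr ⟨w, by simpa using h1, rfl⟩
          · rintro (h | ⟨w', hw', hww⟩)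
            · exact absurd h (by simp)
            · obtain rfl : w' = w := by simpa using hww
              simpa using hw'
      rw [hset, Finset.sum_insert (by simp), Finset.sum_image (fun _ _ _ _ h => by
        simpa using h), hrefl none] at hdual
      -- split off w = x
      set W := Finset.univ.filter (fun w : Word n k => wordLE x w) with hW
      have hxW : x ∈ W := by simp [hW, wordLE_refl]
      rw [← Finset.add_sum_erase W _ hxW] at hdual
      have herase : ∑ w ∈ W.erase x, μ (some w) none = ∑ w ∈ W.erase x, Fv n k (w.1 : ℕ) := by
        refine Finset.sum_congr rfl fun w hw => ?_
        rw [Finset.mem_erase, hW, Finset.mem_filter] at hw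
        have hlt : (x.1 : ℕ) < (w.1 : ℕ) := wordLE_len_lt hw.2.2 (Ne.symm hw.1)
        have hwk : (w.1 : ℕ) ≤ k := by omega
        exact IH (k - (w.1 : ℕ)) (by omega) w rfl
      have hsum : ∑ w ∈ W.erase x, Fv n k (w.1 : ℕ) = -1 - Fv n k (x.1 : ℕ) := by
        have := sum_Fv x
        rw [← hW] at this
        rw [← Finset.add_sum_erase W _ hxW] at this
        linarith
      rw [herase, hsum] at hdual
      linarith
  exact main (k - (x.1 : ℕ)) x rfl

/-- In the poset `A*_{n,k}` of words of length at most `k` over an `n`-letter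
alphabet under subword order, with an artificial top element `1̂`, any function
`μ` satisfying the defining recurrence of the Möbius function satisfies
`μ(β, 1̂) · (-1)^{k+1-|β|} = C(k,|β|) (n-1)^{k-|β|}` for every word `β`. -/
theorem subword_mobius_to_top (n k : ℕ)
    (μ : Option (Word n k) → Option (Word n k) → ℤ)
    (hrefl : ∀ x, μ x x = 1)
    (hrec : ∀ x y : Option (Word n k), wordLE' x y → x ≠ y →
      ∑ z ∈ Finset.univ.filter (fun z => wordLE' x z ∧ wordLE' z y), μ x z = 0)
    (β : Word n k) :
    μ (some β) none * (-1) ^ (k + 1 - (β.1 : ℕ)) =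
      (k.choose (β.1 : ℕ)) * ((n : ℤ) - 1) ^ (k - (β.1 : ℕ)) := by
  rw [mu_formula μ hrefl hrec β, Fv]
  have : ((-1:ℤ))^(k+1-(β.1:ℕ)) * (-1:ℤ)^(k+1-(β.1:ℕ)) = 1 := by
    rw [← mul_pow]; norm_num
  calc (-1:ℤ)^(k+1-(β.1:ℕ)) * (k.choose (β.1:ℕ) : ℤ) * ((n:ℤ)-1)^(k-(β.1:ℕ))
        * (-1)^(k+1-(β.1:ℕ))
      = ((-1:ℤ)^(k+1-(β.1:ℕ)) * (-1:ℤ)^(k+1-(β.1:ℕ)))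
        * ((k.choose (β.1:ℕ) : ℤ) * ((n:ℤ)-1)^(k-(β.1:ℕ))) := by ring
    _ = (k.choose (β.1:ℕ) : ℤ) * ((n:ℤ)-1)^(k-(β.1:ℕ)) := by rw [this]; ring
end

section
/- For a word β of length k in subword order over an n-letter alphabet, the number of words of length p ≥ k that contain β as a subword equals Σ_{i=0}^{p-k} C(p,i)·(n-1)^i; in particular it depends only on k and not on β itself. -/
open Finset

noncomputable instance finiteWords (n p : ℕ) (P : List (Fin n) → Prop) :
    Finite {w : List (Fin n) // w.length = p ∧ P w} := by
  haveI : Finite {l : List (Fin n) // l.length = p} :=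
    inferInstanceAs (Finite (List.Vector (Fin n) p))
  exact Finite.of_injective
    (fun w : {w : List (Fin n) // w.length = p ∧ P w} => (⟨w.1, w.2.1⟩ : {l : List (Fin n) // l.length = p}))
    (by intro a b h
        apply Subtype.ext
        have : (⟨a.1, a.2.1⟩ : {l : List (Fin n) // l.length = p}).1 =
            (⟨b.1, b.2.1⟩ : {l : List (Fin n) // l.length = p}).1 := congrArg Subtype.val h
        exact this)

lemma nat_card_sigma {ι : Type*} [Fintype ι] (f : ι → Type*) [∀ i, Finite (f i)] :
    Nat.card (Σ i, f i) = ∑ i, Nat.card (f i) := by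
  have : ∀ i, Fintype (f i) := fun i => Fintype.ofFinite _
  simp [Nat.card_eq_fintype_card, Fintype.card_sigma]

def consEquiv (n p : ℕ) (β : List (Fin n)) :
    {w : List (Fin n) // w.length = p + 1 ∧ β.Sublist w} ≃
      Σ a : Fin n, {w : List (Fin n) // w.length = p ∧ β.Sublist (a :: w)} where
  toFun := fun ⟨w, hw⟩ => match w, hw with
    | a :: w', h => ⟨a, w', by simpa using h.1, h.2⟩
  invFun := fun ⟨a, w, hw⟩ => ⟨a :: w, by simp [hw.1], hw.2⟩
  left_inv := fun ⟨w, hw⟩ => match w, hw with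
    | _ :: _, _ => rfl
  right_inv := fun ⟨a, w, hw⟩ => rfl

lemma sublist_cons_ne {n : ℕ} {a b : Fin n} (hab : a ≠ b) (β w : List (Fin n)) :
    (b :: β).Sublist (a :: w) ↔ (b :: β).Sublist w := by
  constructor
  · intro h
    cases h with
    | cons _ h => exact h
    | cons_cons => exact absurd rfl hab
  · exact fun h => h.cons a

lemma sum_pascal (p m x : ℕ) :
    ∑ i ∈ range (m + 2), (p + 1).choose i * x ^ i =
      ∑ i ∈ range (m + 2), p.choose i * x ^ i +
        x * ∑ i ∈ range (m + 1), p.choose i * x ^ i := by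
  induction m with
  | zero =>
    simp [Finset.sum_range_succ, Nat.choose_one_right]
    ring
  | succ m ih =>
    show ∑ i ∈ range ((m + 2) + 1), (p + 1).choose i * x ^ i =
      ∑ i ∈ range ((m + 2) + 1), p.choose i * x ^ i +
        x * ∑ i ∈ range ((m + 1) + 1), p.choose i * x ^ i
    rw [Finset.sum_range_succ (fun i => (p + 1).choose i * x ^ i) (m + 2),
      Finset.sum_range_succ (fun i => p.choose i * x ^ i) (m + 2),
      Finset.sum_range_succ (fun i => p.choose i * x ^ i) (m + 1), ih,
      Finset.sum_range_succ (fun i => p.choose i * x ^ i) (m + 1),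
      show (p + 1).choose (m + 2) = p.choose (m + 1) + p.choose (m + 2) from
        Nat.choose_succ_succ p (m + 1)]
    ring

lemma binomial_sum (n p : ℕ) (hn : 1 ≤ n) :
    ∑ i ∈ range (p + 1), p.choose i * (n - 1) ^ i = n ^ p := by
  conv_rhs => rw [← Nat.sub_add_cancel hn, add_pow]
  simp [mul_comm]

lemma key (n : ℕ) (hn : 1 ≤ n) :
    ∀ p (β : List (Fin n)), β.length ≤ p →
      Nat.card {w : List (Fin n) // w.length = p ∧ β.Sublist w} =
        ∑ i ∈ Finset.range (p - β.length + 1), p.choose i * (n - 1) ^ i := by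
  intro p
  induction p with
  | zero =>
    intro β hβ
    rw [Nat.le_zero] at hβ
    rw [List.length_eq_zero_iff] at hβ
    subst hβ
    have e : {w : List (Fin n) // w.length = 0 ∧ List.Sublist [] w} ≃ Unit :=
      { toFun := fun _ => ()
        invFun := fun _ => ⟨[], rfl, List.nil_sublist _⟩
        left_inv := fun ⟨w, hw⟩ => by
          cases (List.length_eq_zero_iff.mp hw.1); rfl
        right_inv := fun _ => rfl }
    rw [Nat.card_congr e]
    simp
  | succ p ih =>
    intro β hβ
    rw [Nat.card_congr (consEquiv n p β), nat_card_sigma]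
    cases β with
    | nil =>
      have hfib : ∀ a : Fin n,
          Nat.card {w : List (Fin n) // w.length = p ∧ List.Sublist [] (a :: w)} =
            n ^ p := by
        intro a
        have e : {w : List (Fin n) // w.length = p ∧ List.Sublist [] (a :: w)} ≃
            {w : List (Fin n) // w.length = p ∧ List.Sublist [] w} :=
          Equiv.subtypeEquivRight (fun w => by simp)
        rw [Nat.card_congr e]
        have := ih [] (Nat.zero_le p)
        simpa [binomial_sum n p hn] using this
      simp only [hfib, Finset.sum_const, card_univ, Fintype.card_fin, smul_eq_mul]
      rw [show p + 1 - List.length ([] : List (Fin n)) + 1 = (p + 1) + 1 by simp,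
        binomial_sum n (p + 1) hn, pow_succ, mul_comm]
    | cons b β' =>
      have hb : ∀ a : Fin n,
          Nat.card {w : List (Fin n) // w.length = p ∧ (b :: β').Sublist (a :: w)} =
            if a = b then Nat.card {w : List (Fin n) // w.length = p ∧ β'.Sublist w}
            else Nat.card {w : List (Fin n) // w.length = p ∧ (b :: β').Sublist w} := by
        intro a
        by_cases hab : a = b
        · subst hab
          rw [if_pos rfl]
          exact Nat.card_congr (Equiv.subtypeEquivRight (fun w => by simp))
        · rw [if_neg hab]
          exact Nat.card_congr (Equiv.subtypeEquivRight (fun w => by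
            simp [sublist_cons_ne hab]))
      simp only [hb]
      rw [← Finset.add_sum_erase _ _ (Finset.mem_univ b), if_pos rfl,
        Finset.sum_congr rfl (fun a ha => if_neg (Finset.ne_of_mem_erase ha)),
        Finset.sum_const, Finset.card_erase_of_mem (Finset.mem_univ b),
        Finset.card_univ, Fintype.card_fin, smul_eq_mul]
      have hβ' : β'.length ≤ p := by
        simpa using Nat.succ_le_succ_iff.mp hβ
      rcases lt_or_eq_of_le hβ' with hlt | heq
      · -- β'.length < p, so (b::β').length ≤ p
        have h2 := ih (b :: β') (by simpa using hlt)
        have h1 := ih β' hβ'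
        rw [h1, h2]
        have hm : p - β'.length = (p - (b :: β').length) + 1 := by
          simp only [List.length_cons]
          omega
        have hm2 : p + 1 - (b :: β').length = (p - (b :: β').length) + 1 := by
          simp only [List.length_cons]
          omega
        rw [hm, hm2, show p - (b :: β').length + 1 + 1 = p - (b :: β').length + 2 by omega]
        exact (sum_pascal p (p - (b :: β').length) (n - 1)).symm
      · -- β'.length = p : the second card is zero
        have hz : Nat.card {w : List (Fin n) // w.length = p ∧ (b :: β').Sublist w} = 0 := by
          have : IsEmpty {w : List (Fin n) // w.length = p ∧ (b :: β').Sublist w} :=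
            ⟨fun ⟨w, hw⟩ => by
              have := hw.2.length_le
              simp [hw.1, heq] at this⟩
          simp
        rw [hz, mul_zero, add_zero, ih β' hβ']
        rw [show p - β'.length = 0 by omega, show p + 1 - (b :: β').length + 1 = 1 by
          simp [List.length_cons]; omega]
        simp

/-- For a word `β` of length `k` over an `n`-letter alphabet (`n ≥ 1`), the
number of words of length `p ≥ k` containing `β` as a subword is
`Σ_{i=0}^{p-k} C(p,i)(n-1)^i`; in particular it depends only on `k`. -/
theorem card_words_containing_subword (n k p : ℕ) (hn : 1 ≤ n) (hkp : k ≤ p)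
    (β : List (Fin n)) (hβ : β.length = k) :
    Nat.card {w : List (Fin n) // w.length = p ∧ β.Sublist w} =
      ∑ i ∈ Finset.range (p - k + 1), p.choose i * (n - 1) ^ i := by
  subst hβ
  exact key n hn p β hkp
end

section
/- The number of maximal chains in the poset of nonempty words of length at most k over an n-letter alphabet (ordered by subword order, ranked by length) equals Π_{i=1}^{k} (1 + i·(n-1)). -/
open List Finset

variable {n : ℕ}


open List Finset

variable {n : ℕ}

/-- Canonical insertion pair. -/
def Can (u : List (Fin n)) (p : ℕ) (a : Fin n) : Prop :=
  p ≤ u.length ∧ ∀ h : p < u.length, u[p] ≠ a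

lemma sublist_insertIdx' (u : List (Fin n)) (p : ℕ) (a : Fin n) :
    u <+ u.insertIdx p a := by
  induction u generalizing p with
  | nil => cases p <;> simp [List.insertIdx_zero, List.insertIdx_succ_nil]
  | cons c u ih =>
    cases p with
    | zero => simpa [List.insertIdx_zero] using List.sublist_cons_self a (c :: u)
    | succ p => rw [List.insertIdx_succ_cons]; exact List.cons_sublist_cons.mpr (ih p)

lemma exists_can {u v : List (Fin n)} (hs : u <+ v) (hl : v.length = u.length + 1) :
    ∃ p a, Can u p a ∧ v = u.insertIdx p a := by
  induction u generalizing v with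
  | nil =>
    match v, hl with
    | [a], _ => exact ⟨0, a, ⟨Nat.le_refl _, fun h => by simp at h⟩, rfl⟩
  | cons c u ih =>
    cases v with
    | nil => simp at hl
    | cons b v =>
      simp only [List.length_cons, Nat.succ_inj] at hl
      by_cases hbc : b = c
      · subst hbc
        have hsub : u <+ v := by
          rcases List.sublist_cons_iff.mp hs with h | ⟨r, hr, hrs⟩
          · exact (List.sublist_cons_self b u).trans h
          · cases hr; exact hrs
        obtain ⟨p, a, ⟨hp1, hp2⟩, he⟩ := ih hsub hl
        refine ⟨p + 1, a, ⟨Nat.succ_le_succ hp1, ?_⟩, ?_⟩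
        · intro h
          simpa using hp2 (Nat.lt_of_succ_lt_succ h)
        · rw [List.insertIdx_succ_cons, he]
      · have hsub : c :: u <+ v := by
          rcases List.sublist_cons_iff.mp hs with h | ⟨r, hr, hrs⟩
          · exact h
          · exact absurd (List.head_eq_of_cons_eq hr).symm hbc
        have : c :: u = v := hsub.eq_of_length (by simpa using hl.symm)
        refine ⟨0, b, ⟨Nat.zero_le _, fun h => ?_⟩, by rw [List.insertIdx_zero, this]⟩
        simpa using fun h' => hbc h'.symm

lemma can_inj {u : List (Fin n)} {p q : ℕ} {a b : Fin n}
    (h1 : Can u p a) (h2 : Can u q b)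
    (he : u.insertIdx p a = u.insertIdx q b) : p = q ∧ a = b := by
  obtain ⟨hp, hpa⟩ := h1
  obtain ⟨hq, hqb⟩ := h2
  have key : ∀ {p' q' : ℕ} {a' b' : Fin n}, p' ≤ u.length → q' ≤ u.length →
      (∀ h : p' < u.length, u[p'] ≠ a') →
      u.insertIdx p' a' = u.insertIdx q' b' → p' < q' → False := by
    intro p' q' a' b' hp' hq' hpa' he' hlt
    have hplen : p' < u.length := Nat.lt_of_lt_of_le hlt hq'
    have h1 : (u.insertIdx p' a')[p']'(by
        rw [List.length_insertIdx_of_le_length hp']; omega) = a' :=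
      List.getElem_insertIdx_self _
    have h2 : (u.insertIdx q' b')[p']'(by
        rw [List.length_insertIdx_of_le_length hq']; omega) = u[p'] :=
      List.getElem_insertIdx_of_lt hlt _
    rw [List.getElem_of_eq he' _] at h1
    exact hpa' hplen (h1 ▸ h2.symm)
  rcases Nat.lt_trichotomy p q with h | h | h
  · exact absurd (key hp hq hpa he h) not_false
  · subst h
    refine ⟨rfl, ?_⟩
    have h1 : (u.insertIdx p a)[p]'(by rw [List.length_insertIdx_of_le_length hp]; omega) = a :=
      List.getElem_insertIdx_self _
    have h2 : (u.insertIdx p b)[p]'(by rw [List.length_insertIdx_of_le_length hq]; omega) = b :=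
      List.getElem_insertIdx_self _
    rw [List.getElem_of_eq he _] at h1
    exact h1.symm.trans h2
  · exact absurd (key hq hp hqb he.symm h) not_false

def extF (u : List (Fin n)) : Finset (List (Fin n)) :=
  ((Finset.range (u.length + 1) ×ˢ (Finset.univ : Finset (Fin n))).filter
      (fun pa => ∀ h : pa.1 < u.length, u[pa.1] ≠ pa.2)).image
    fun pa => u.insertIdx pa.1 pa.2

lemma mem_extF {u v : List (Fin n)} :
    v ∈ extF u ↔ u <+ v ∧ v.length = u.length + 1 := by
  constructor
  · intro hv
    simp only [extF, Finset.mem_image, Finset.mem_filter, Finset.mem_product,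
      Finset.mem_range, Finset.mem_univ] at hv
    obtain ⟨⟨p, a⟩, ⟨⟨hp, -⟩, -⟩, he⟩ := hv
    subst he
    exact ⟨sublist_insertIdx' u p a, List.length_insertIdx_of_le_length (Nat.lt_succ_iff.mp hp) _⟩
  · rintro ⟨hs, hl⟩
    obtain ⟨p, a, ⟨hp1, hp2⟩, he⟩ := exists_can hs hl
    simp only [extF, Finset.mem_image, Finset.mem_filter, Finset.mem_product,
      Finset.mem_range, Finset.mem_univ]
    exact ⟨⟨p, a⟩, ⟨⟨Nat.lt_succ_of_le hp1, trivial⟩, hp2⟩, he.symm⟩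

lemma card_extF (u : List (Fin n)) :
    (extF u).card = u.length * (n - 1) + n := by
  rw [extF, Finset.card_image_of_injOn]
  · rw [Finset.card_filter, Finset.sum_product]
    have h1 : ∀ p ∈ Finset.range u.length,
        (∑ a : Fin n, if ∀ h : p < u.length, u[p] ≠ a then 1 else 0) = n - 1 := by
      intro p hp
      rw [Finset.mem_range] at hp
      have : ∀ a : Fin n, (∀ h : p < u.length, u[p] ≠ a) ↔ u[p] ≠ a := by
        intro a; exact ⟨fun h => h hp, fun h _ => h⟩
      simp only [this]
      rw [← Finset.card_filter, Finset.filter_ne, Finset.card_erase_of_mem (Finset.mem_univ _),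
        Finset.card_univ, Fintype.card_fin]
    rw [Finset.range_add_one, Finset.sum_insert Finset.notMem_range_self,
      Finset.sum_congr rfl h1]
    have : (∑ a : Fin n, if ∀ h : u.length < u.length, u[u.length] ≠ a then 1 else 0) = n := by
      simp
    rw [this, Finset.sum_const, Finset.card_range, smul_eq_mul]
    omega
  · intro pa hpa qb hqb he
    simp only [Finset.coe_filter, Finset.mem_product, Finset.mem_range, Finset.mem_univ,
      Set.mem_setOf_eq] at hpa hqb
    obtain ⟨p, q⟩ := can_inj (u := u) (p := pa.1) (q := qb.1) (a := pa.2) (b := qb.2)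
      ⟨Nat.lt_succ_iff.mp hpa.1.1, hpa.2⟩ ⟨Nat.lt_succ_iff.mp hqb.1.1, hqb.2⟩ he
    exact Prod.ext p q

abbrev ChainP (k : ℕ) (c : Fin k → List (Fin n)) : Prop :=
  (∀ i : Fin k, (c i).length = (i : ℕ) + 1) ∧
  ∀ i : Fin k, ∀ h : (i : ℕ) + 1 < k, (c i).Sublist (c ⟨(i : ℕ) + 1, h⟩)

abbrev ChainT (n k : ℕ) := {c : Fin k → List (Fin n) // ChainP k c}

def prevW (k : ℕ) (c : Fin k → List (Fin n)) : List (Fin n) :=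
  if h : 0 < k then c ⟨k - 1, by omega⟩ else []

lemma length_prevW {k : ℕ} {c : Fin k → List (Fin n)}
    (hl : ∀ i : Fin k, (c i).length = (i : ℕ) + 1) : (prevW k c).length = k := by
  unfold prevW
  split
  · rw [hl]; simp; omega
  · simp; omega

instance finListFixedLen (m : ℕ) : Finite {l : List (Fin n) // l.length = m} :=
  inferInstanceAs (Finite (List.Vector (Fin n) m))

instance finiteChainT (n k : ℕ) : Finite (ChainT n k) := by
  have hinj : Function.Injective
      (fun c : ChainT n k => (fun i : Fin k => (⟨(c.1 i), c.2.1 i⟩ :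
        {l : List (Fin n) // l.length = (i : ℕ) + 1}))) := by
    intro c c' h
    exact Subtype.ext (funext fun i => congrArg Subtype.val (congrFun h i))
  exact Finite.of_injective _ hinj

def chainEquiv (n k : ℕ) :
    ChainT n (k + 1) ≃ Σ c : ChainT n k,
      {v : List (Fin n) // prevW k c.1 <+ v ∧ v.length = (prevW k c.1).length + 1} where
  toFun C := by
    refine ⟨⟨fun i => C.1 i.castSucc, fun i => C.2.1 i.castSucc, fun i h => ?_⟩,
      ⟨C.1 (Fin.last k), ?_, ?_⟩⟩
    · have h' : (i : ℕ) + 1 < k + 1 := by omega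
      have := C.2.2 i.castSucc h'
      have he : (⟨((i.castSucc : Fin (k+1)) : ℕ) + 1, h'⟩ : Fin (k+1)) =
          (⟨(i : ℕ) + 1, h⟩ : Fin k).castSucc := by
        apply Fin.ext; simp
      rwa [he] at this
    · unfold prevW
      split
      · next hk =>
        have h' : (k - 1 : ℕ) + 1 < k + 1 := by omega
        have := C.2.2 (⟨k - 1, by omega⟩ : Fin k).castSucc (by simpa using h')
        have he : (⟨(((⟨k - 1, by omega⟩ : Fin k).castSucc : Fin (k+1)) : ℕ) + 1,
            by simpa using h'⟩ : Fin (k+1)) = Fin.last k := by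
          apply Fin.ext; simp; omega
        rwa [he] at this
      · exact List.nil_sublist _
    · rw [length_prevW (fun i => C.2.1 i.castSucc), C.2.1 (Fin.last k)]
      simp
  invFun cv := by
    refine ⟨Fin.snoc cv.1.1 cv.2.1, fun i => ?_, fun i h => ?_⟩
    · refine Fin.lastCases ?_ (fun j => ?_) i
      · rw [Fin.snoc_last, cv.2.2.2, length_prevW cv.1.2.1]
        simp
      · rw [Fin.snoc_castSucc, cv.1.2.1 j]
        simp
    · have hi : (i : ℕ) < k := by omega
      have hei : i = (⟨(i : ℕ), hi⟩ : Fin k).castSucc := by apply Fin.ext; simp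
      have h1 : Fin.snoc (α := fun _ => List (Fin n)) cv.1.1 cv.2.1 i = cv.1.1 ⟨(i : ℕ), hi⟩ := by
        conv_lhs => rw [hei]
        rw [Fin.snoc_castSucc]
      rw [h1]
      rcases Nat.lt_or_ge ((i : ℕ) + 1) k with hik | hik
      · have he : (⟨(i : ℕ) + 1, h⟩ : Fin (k+1)) =
            (⟨(i : ℕ) + 1, hik⟩ : Fin k).castSucc := by apply Fin.ext; simp
        rw [he, Fin.snoc_castSucc]
        exact cv.1.2.2 ⟨(i : ℕ), hi⟩ hik
      · have hik' : (i : ℕ) + 1 = k := by omega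
        have he : (⟨(i : ℕ) + 1, h⟩ : Fin (k+1)) = Fin.last k := by
          apply Fin.ext; simp [hik']
        rw [he, Fin.snoc_last]
        have hp : prevW k cv.1.1 <+ cv.2.1 := cv.2.2.1
        have hpe : prevW k cv.1.1 = cv.1.1 ⟨(i : ℕ), hi⟩ := by
          unfold prevW
          rw [dif_pos (by omega : 0 < k)]
          exact congrArg _ (Fin.ext (by simp only [Fin.val_mk]; omega))
        rw [← hpe]
        exact hp
  left_inv C := by
    apply Subtype.ext
    exact Fin.snoc_init_self C.1
  right_inv cv := by
    obtain ⟨c, v⟩ := cv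
    have hc : (fun i : Fin k => Fin.snoc (α := fun _ => List (Fin n)) c.1 v.1 i.castSucc) = c.1 := by
      funext i; simp
    apply Sigma.ext
    · exact Subtype.ext hc
    · refine (Subtype.heq_iff_coe_eq ?_).mpr ?_
      · intro x
        simp [Fin.snoc_castSucc]
      · simp

/-- The number of maximal chains in the ranked poset of nonempty words of
length at most `k` over an `n`-letter alphabet under subword order (a chain
picks one word of each length `1,…,k`, each a subword of the next) equals
`Π_{i=1}^{k} (1 + i(n-1))`. -/
theorem card_maximal_chains_subword (n k : ℕ) (hn : 1 ≤ n) :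
    Nat.card {c : Fin k → List (Fin n) //
        (∀ i : Fin k, (c i).length = (i : ℕ) + 1) ∧
        ∀ i : Fin k, ∀ h : (i : ℕ) + 1 < k, (c i).Sublist (c ⟨(i : ℕ) + 1, h⟩)} =
      ∏ i ∈ Finset.Icc 1 k, (1 + i * (n - 1)) := by
  show Nat.card (ChainT n k) = _
  induction k with
  | zero =>
    haveI : Unique (ChainT n 0) :=
      ⟨⟨⟨fun i => i.elim0, fun i => i.elim0, fun i => i.elim0⟩⟩,
        fun c => Subtype.ext (funext fun i => i.elim0)⟩
    rw [Nat.card_unique, Finset.Icc_eq_empty (by omega), Finset.prod_empty]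
  | succ k ih =>
    haveI := Fintype.ofFinite (ChainT n k)
    haveI : ∀ c : ChainT n k,
        Fintype {v : List (Fin n) // prevW k c.1 <+ v ∧ v.length = (prevW k c.1).length + 1} :=
      fun c => Fintype.subtype (extF (prevW k c.1)) (fun v => mem_extF)
    rw [Nat.card_congr (chainEquiv n k), Nat.card_eq_fintype_card, Fintype.card_sigma]
    have hcard : ∀ c : ChainT n k,
        Fintype.card {v : List (Fin n) //
          prevW k c.1 <+ v ∧ v.length = (prevW k c.1).length + 1} = k * (n - 1) + n := by
      intro c
      rw [Fintype.card_of_subtype (extF (prevW k c.1)) (fun v => mem_extF), card_extF,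
        length_prevW c.2.1]
    rw [Finset.sum_congr rfl (fun c _ => hcard c), Finset.sum_const, Finset.card_univ,
      ← Nat.card_eq_fintype_card, ih, smul_eq_mul,
      Finset.prod_Icc_succ_top (by omega : 1 ≤ k + 1)]
    obtain ⟨m, rfl⟩ : ∃ m, n = m + 1 := ⟨n - 1, by omega⟩
    simp only [Nat.add_sub_cancel]
    ring
end

section
/- For 1 ≤ r ≤ k and n ≥ 2, the identity Σ_{i=0}^{k-r} (-1)^i · C(k, r+i) · n^{r+i} · (n-1)^{k-(r+i)} + (-1)^{k+1-r} = Σ_{i=1+k-r}^{k} C(k,i) · C(i-1, k-r) · (n-1)^i holds. -/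
lemma sumA (x : ℤ) (k m : ℕ) (h : m ≤ k) :
    ∑ i ∈ Finset.Icc m k, (k.choose i : ℤ) * (i.choose m) * x ^ i
      = (k.choose m : ℤ) * x ^ m * (x + 1) ^ (k - m) := by
  rw [← Finset.Ico_add_one_right_eq_Icc, Finset.sum_Ico_eq_sum_range]
  have hkm : k + 1 - m = (k - m) + 1 := by omega
  rw [hkm, add_pow, Finset.mul_sum]
  apply Finset.sum_congr rfl
  intro j hj
  have hj' : j ≤ k - m := by simpa [Nat.lt_succ_iff] using hj
  have key : k.choose (m + j) * (m + j).choose m = k.choose m * (k - m).choose j := by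
    have h2 := Nat.choose_mul (n := k) (k := m + j) (s := m) (by omega)
    simpa using h2
  have keyZ : (k.choose (m + j) : ℤ) * ((m + j).choose m) =
      (k.choose m : ℤ) * ((k - m).choose j) := by exact_mod_cast key
  linear_combination (x ^ m * x ^ j) * keyZ

lemma mainAux (x : ℤ) : ∀ d k r : ℕ, 1 ≤ r → r + d = k →
    (∑ i ∈ Finset.range (d + 1), (-1 : ℤ) ^ i * (k.choose (r + i)) *
        (x + 1) ^ (r + i) * x ^ (d - i)) + (-1 : ℤ) ^ (d + 1)
      = ∑ i ∈ Finset.Icc (d + 1) k, (k.choose i : ℤ) * ((i - 1).choose d) * x ^ i := by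
  intro d
  induction d with
  | zero =>
    intro k r hr hk
    have hkr : k = r := by omega
    subst hkr
    rw [Finset.sum_range_one]
    simp only [pow_zero, Nat.add_zero, Nat.sub_self, Nat.choose_self, Nat.cast_one,
      one_mul, mul_one]
    have hb : (x + 1) ^ k = ∑ i ∈ Finset.range (k + 1), x ^ i * 1 ^ (k - i) * (k.choose i : ℤ) :=
      add_pow x 1 k
    rw [Finset.sum_range_succ'] at hb
    simp only [one_pow, mul_one, pow_zero, Nat.choose_zero_right, Nat.cast_one, one_mul] at hb
    rw [hb, ← Finset.Ico_add_one_right_eq_Icc, Finset.sum_Ico_eq_sum_range]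
    have hk1 : k + 1 - 1 = k := by omega
    rw [hk1]
    have hc : ∀ i ∈ Finset.range k, (k.choose (1 + i) : ℤ) * (((1 + i) - 1).choose 0) * x ^ (1 + i)
        = x ^ (i + 1) * (k.choose (i + 1) : ℤ) := by
      intro i _
      rw [Nat.add_comm 1 i]
      simp
      ring
    rw [Finset.sum_congr rfl hc]
    ring
  | succ d ih =>
    intro k r hr hk
    have ih' := ih k (r + 1) (by omega) (by omega)
    rw [Finset.sum_range_succ']
    have hterm : ∀ i ∈ Finset.range (d + 1),
        (-1 : ℤ) ^ (i + 1) * (k.choose (r + (i + 1))) * (x + 1) ^ (r + (i + 1)) *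
            x ^ (d + 1 - (i + 1))
          = -((-1 : ℤ) ^ i * (k.choose ((r + 1) + i)) * (x + 1) ^ ((r + 1) + i) * x ^ (d - i)) := by
      intro i _
      have e1 : r + (i + 1) = (r + 1) + i := by omega
      have e2 : d + 1 - (i + 1) = d - i := by omega
      rw [e1, e2, pow_succ]
      ring
    rw [Finset.sum_congr rfl hterm, Finset.sum_neg_distrib]
    have hS : ∑ i ∈ Finset.range (d + 1), (-1 : ℤ) ^ i * (k.choose ((r + 1) + i)) *
        (x + 1) ^ ((r + 1) + i) * x ^ (d - i)
        = (∑ i ∈ Finset.Icc (d + 1) k, (k.choose i : ℤ) * ((i - 1).choose d) * x ^ i)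
          - (-1 : ℤ) ^ (d + 1) := by linarith [ih']
    rw [hS]
    -- goal now: -(RHS' - (-1)^(d+1)) + f 0 + (-1)^(d+2) = RHS(d+1)
    have hkey : (∑ i ∈ Finset.Icc (d + 1 + 1) k, (k.choose i : ℤ) * ((i - 1).choose (d + 1)) * x ^ i)
        + (∑ i ∈ Finset.Icc (d + 1) k, (k.choose i : ℤ) * ((i - 1).choose d) * x ^ i)
        = (k.choose r : ℤ) * (x + 1) ^ r * x ^ (d + 1) := by
      have hdk : d + 1 < k := by omega
      have hext : ∑ i ∈ Finset.Icc (d + 1) k, (k.choose i : ℤ) * ((i - 1).choose (d + 1)) * x ^ i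
          = ∑ i ∈ Finset.Icc (d + 1 + 1) k, (k.choose i : ℤ) * ((i - 1).choose (d + 1)) * x ^ i := by
        rw [← Finset.Ico_add_one_right_eq_Icc, ← Finset.Ico_add_one_right_eq_Icc,
          Finset.sum_eq_sum_Ico_succ_bot (by omega)]
        simp [Nat.choose_succ_self]
      rw [← hext, ← Finset.sum_add_distrib]
      have hc : ∀ i ∈ Finset.Icc (d + 1) k,
          (k.choose i : ℤ) * ((i - 1).choose (d + 1)) * x ^ i
            + (k.choose i : ℤ) * ((i - 1).choose d) * x ^ i
          = (k.choose i : ℤ) * (i.choose (d + 1)) * x ^ i := by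
        intro i hi
        have hi1 : d + 1 ≤ i := (Finset.mem_Icc.mp hi).1
        obtain ⟨j, rfl⟩ : ∃ j, i = j + 1 := ⟨i - 1, by omega⟩
        rw [Nat.add_sub_cancel, Nat.choose_succ_succ]
        push_cast
        ring
      rw [Finset.sum_congr rfl hc, sumA x k (d + 1) (by omega)]
      have : k - (d + 1) = r := by omega
      rw [this]
      have hsym : k.choose (d + 1) = k.choose r := by
        rw [show r = k - (d + 1) by omega]
        exact (Nat.choose_symm (by omega)).symm
      rw [hsym]
      ring
    have e0 : r + 0 = r := by omega
    have e1 : d + 1 - 0 = d + 1 := rfl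
    rw [e0, e1, pow_zero, one_mul]
    have hpow : (-1 : ℤ) ^ (d + 1 + 1) = -(-1 : ℤ) ^ (d + 1) := by rw [pow_succ]; ring
    rw [hpow]
    linarith [hkey]

/-- For `1 ≤ r ≤ k` and `n ≥ 2`,
`Σ_{i=0}^{k-r} (-1)^i C(k,r+i) n^{r+i} (n-1)^{k-(r+i)} + (-1)^{k+1-r}
  = Σ_{i=1+k-r}^{k} C(k,i) C(i-1,k-r) (n-1)^i`. -/
theorem whitney_alternating_identity (n k r : ℕ) (hr : 1 ≤ r) (hrk : r ≤ k)
    (hn : 2 ≤ n) :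
    (∑ i ∈ Finset.range (k - r + 1), (-1 : ℤ) ^ i * (k.choose (r + i)) *
        (n : ℤ) ^ (r + i) * ((n : ℤ) - 1) ^ (k - (r + i))) + (-1 : ℤ) ^ (k + 1 - r) =
      ∑ i ∈ Finset.Icc (k - r + 1) k,
        (k.choose i) * ((i - 1).choose (k - r)) * ((n : ℤ) - 1) ^ i := by
  set d := k - r with hd
  have hk : r + d = k := by omega
  have hsub : ∀ i, k - (r + i) = d - i := fun i => by omega
  have h1 : k + 1 - r = d + 1 := by omega
  have := mainAux ((n : ℤ) - 1) d k r hr hk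
  have hx : ((n : ℤ) - 1) + 1 = (n : ℤ) := by ring
  rw [hx] at this
  simp only [hsub, h1]
  exact this
end

section
/- For 1 ≤ r ≤ k, the identity Σ_{i=1+k-r}^{k} (-1)^{i-1} · C(k,i) · C(i-1, k-r) = (-1)^{k-r} holds. -/
open Finset

lemma aux (k : ℕ) : ∀ n m : ℕ, m + n + 1 = k →
    ∑ i ∈ Finset.Icc (m + 1) k,
        (-1 : ℤ) ^ (i - 1) * (k.choose i) * ((i - 1).choose m) = (-1 : ℤ) ^ m := by
  intro n
  induction n with
  | zero =>
    intro m hm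
    subst hm
    simp
  | succ n ih =>
    intro m hm
    have hstep : ∀ i ∈ Finset.Icc (m + 1) k,
        (-1 : ℤ) ^ (i - 1) * (k.choose i) * ((i - 1).choose m) =
          (-1 : ℤ) ^ (i - 1) * (k.choose i) * (i.choose (m + 1))
          - (-1 : ℤ) ^ (i - 1) * (k.choose i) * ((i - 1).choose (m + 1)) := by
      intro i hi
      simp only [Finset.mem_Icc] at hi
      obtain ⟨h1, h2⟩ := hi
      have hi1 : 1 ≤ i := le_trans (Nat.le_add_left 1 m) h1
      have hch : i.choose (m + 1) = (i - 1).choose m + (i - 1).choose (m + 1) := by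
        conv_lhs => rw [← Nat.succ_pred_eq_of_pos hi1]
        rw [Nat.choose_succ_succ']
        rfl
      rw [hch]
      push_cast
      ring
    rw [Finset.sum_congr rfl hstep, Finset.sum_sub_distrib]
    have hB : ∑ i ∈ Finset.Icc (m + 1) k,
        (-1 : ℤ) ^ (i - 1) * (k.choose i) * ((i - 1).choose (m + 1)) = (-1 : ℤ) ^ (m + 1) := by
      have hins : Finset.Icc (m + 1) k = insert (m + 1) (Finset.Icc (m + 2) k) := by
        rw [show m + 2 = (m+1) + 1 from rfl, Finset.Icc_add_one_left_eq_Ioc, Finset.Icc_add_one_left_eq_Ioc,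
          Finset.Ioc_insert_left (by omega : m + 1 ≤ k), ← Finset.Icc_add_one_left_eq_Ioc]
      rw [hins, Finset.sum_insert (by simp)]
      rw [ih (m + 1) (by omega)]
      simp
    rw [hB]
    have hA : ∑ i ∈ Finset.Icc (m + 1) k,
        (-1 : ℤ) ^ (i - 1) * (k.choose i) * (i.choose (m + 1)) = 0 := by
      have h2 : ∀ i ∈ Finset.Icc (m + 1) k,
          (-1 : ℤ) ^ (i - 1) * (k.choose i) * (i.choose (m + 1)) =
            (k.choose (m + 1) : ℤ) * ((-1) ^ (i - 1) * ((k - (m+1)).choose (i - (m+1)))) := by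
        intro i hi
        simp only [Finset.mem_Icc] at hi
        have := Nat.choose_mul (n := k) (hi.1 : m + 1 ≤ i)
        have hz : (k.choose i : ℤ) * (i.choose (m+1)) = (k.choose (m+1) : ℤ) * ((k - (m+1)).choose (i - (m+1))) := by
          exact_mod_cast congrArg (Nat.cast : ℕ → ℤ) this
        calc (-1 : ℤ) ^ (i - 1) * (k.choose i) * (i.choose (m + 1))
            = (-1 : ℤ) ^ (i - 1) * ((k.choose i : ℤ) * (i.choose (m+1))) := by ring
          _ = (k.choose (m + 1) : ℤ) * ((-1) ^ (i - 1) * ((k - (m+1)).choose (i - (m+1)))) := by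
              rw [hz]; ring
      rw [Finset.sum_congr rfl h2, ← Finset.mul_sum]
      have hre : ∑ i ∈ Finset.Icc (m + 1) k,
          (-1 : ℤ) ^ (i - 1) * ((k - (m+1)).choose (i - (m+1))) = 0 := by
        rw [← Finset.Ico_add_one_right_eq_Icc, Finset.sum_Ico_eq_sum_range]
        have hk : k + 1 - (m + 1) = (n + 1) + 1 := by omega
        have hkm : k - (m + 1) = n + 1 := by omega
        rw [hk, hkm]
        have : ∀ j ∈ Finset.range (n + 1 + 1),
            (-1 : ℤ) ^ (m + 1 + j - 1) * ((n+1).choose (m + 1 + j - (m+1))) =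
              (-1 : ℤ) ^ m * ((-1) ^ j * ((n+1).choose j)) := by
          intro j _
          have e1 : m + 1 + j - 1 = m + j := by omega
          have e2 : m + 1 + j - (m + 1) = j := by omega
          rw [e1, e2, pow_add]; ring
        rw [Finset.sum_congr rfl this, ← Finset.mul_sum,
          Int.alternating_sum_range_choose_of_ne (Nat.succ_ne_zero n), mul_zero]
      rw [hre, mul_zero]
    rw [hA]
    ring

/-- For `1 ≤ r ≤ k`, `Σ_{i=1+k-r}^{k} (-1)^{i-1} C(k,i) C(i-1,k-r) = (-1)^{k-r}`. -/
theorem alternating_coefficient_sum (k r : ℕ) (hr : 1 ≤ r) (hrk : r ≤ k) :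
    ∑ i ∈ Finset.Icc (k - r + 1) k,
        (-1 : ℤ) ^ (i - 1) * (k.choose i) * ((i - 1).choose (k - r)) =
      (-1 : ℤ) ^ (k - r) := by
  exact aux k (r - 1) (k - r) (by omega)
end

section
/- Fix 1 ≤ s_1 < s_2. For 1 ≤ v ≤ s_1, define c_v = Σ_{j=1}^{min(v, s_2-s_1)} C(s_2-j, v-j)·C(s_1+j-1, j). Then c_v ≥ C(s_1, v). -/
/-- For `1 ≤ s₁ < s₂` and `1 ≤ v ≤ s₁`, with
`c_v = Σ_{j=1}^{min(v, s₂-s₁)} C(s₂-j, v-j) C(s₁+j-1, j)`, one has `c_v ≥ C(s₁,v)`. -/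
theorem cv_ge_choose (s₁ s₂ v : ℕ) (hs₁ : 1 ≤ s₁) (hs : s₁ < s₂)
    (hv : 1 ≤ v) (hvs : v ≤ s₁) :
    s₁.choose v ≤
      ∑ j ∈ Finset.Icc 1 (min v (s₂ - s₁)),
        (s₂ - j).choose (v - j) * (s₁ + j - 1).choose j := by
  have h1 : (1 : ℕ) ∈ Finset.Icc 1 (min v (s₂ - s₁)) := by
    simp [Nat.le_min, hv, Nat.le_sub_of_add_le, hs]
    omega
  have key : s₁.choose v ≤ (s₂ - 1).choose (v - 1) * (s₁ + 1 - 1).choose 1 := by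
    have h2 : s₁ * (s₁ - 1).choose (v - 1) = s₁.choose v * v := by
      have := Nat.add_one_mul_choose_eq (s₁ - 1) (v - 1)
      have e1 : s₁ - 1 + 1 = s₁ := by omega
      have e2 : v - 1 + 1 = v := by omega
      simp only [Nat.succ_eq_add_one, e1, e2] at this
      exact this
    have h3 : (s₁ - 1).choose (v - 1) ≤ (s₂ - 1).choose (v - 1) :=
      Nat.choose_le_choose _ (by omega)
    have : s₁.choose v ≤ s₁.choose v * v := Nat.le_mul_of_pos_right _ hv
    calc s₁.choose v ≤ s₁.choose v * v := this
      _ = s₁ * (s₁ - 1).choose (v - 1) := h2.symm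
      _ ≤ s₁ * (s₂ - 1).choose (v - 1) := Nat.mul_le_mul_left _ h3
      _ = (s₂ - 1).choose (v - 1) * (s₁ + 1 - 1).choose 1 := by
          simp [Nat.choose_one_right]; ring
  exact key.trans (Finset.single_le_sum (f := fun j => (s₂ - j).choose (v - j) * (s₁ + j - 1).choose j) (fun i _ => Nat.zero_le _) h1)
end

section
/- Fix 1 ≤ s_1 < s_2 and define c_v = Σ_{j=1}^{min(v, s_2-s_1)} C(s_2-j, v-j)·C(s_1+j-1, j) for 1 ≤ v ≤ s_2. Then Σ_{v=1}^{s_2} (-1)^v · c_v = 0. -/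
/-- For `1 ≤ s₁ < s₂`, with
`c_v = Σ_{j=1}^{min(v, s₂-s₁)} C(s₂-j, v-j) C(s₁+j-1, j)`,
one has `Σ_{v=1}^{s₂} (-1)^v c_v = 0`. -/
theorem alternating_cv_sum (s₁ s₂ : ℕ) (hs₁ : 1 ≤ s₁) (hs : s₁ < s₂) :
    ∑ v ∈ Finset.Icc 1 s₂, (-1 : ℤ) ^ v *
        (∑ j ∈ Finset.Icc 1 (min v (s₂ - s₁)),
          ((s₂ - j).choose (v - j) * (s₁ + j - 1).choose j : ℤ)) = 0 := by
  simp only [Finset.mul_sum]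
  rw [Finset.sum_comm' (s' := fun j => Finset.Icc j s₂) (t' := Finset.Icc 1 (s₂ - s₁))
    (by
      intro v j
      simp only [Finset.mem_Icc, le_min_iff]
      omega)]
  apply Finset.sum_eq_zero
  intro j hj
  simp only [Finset.mem_Icc] at hj
  have hjs : j < s₂ := by omega
  have : ∑ v ∈ Finset.Icc j s₂,
      (-1 : ℤ) ^ v * ((s₂ - j).choose (v - j) * (s₁ + j - 1).choose j : ℤ)
      = ((-1 : ℤ) ^ j * ((s₁ + j - 1).choose j : ℤ)) *
        ∑ k ∈ Finset.range (s₂ - j + 1), (-1 : ℤ) ^ k * ((s₂ - j).choose k : ℤ) := by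
    rw [Finset.mul_sum]
    rw [show Finset.Icc j s₂ = Finset.map ⟨fun k => k + j, add_left_injective j⟩
        (Finset.range (s₂ - j + 1)) from ?_]
    · rw [Finset.sum_map]
      apply Finset.sum_congr rfl
      intro k hk
      simp only [Function.Embedding.coeFn_mk, Nat.add_sub_cancel]
      rw [pow_add]
      ring
    · ext x
      simp only [Finset.mem_Icc, Finset.mem_map, Finset.mem_range,
        Function.Embedding.coeFn_mk]
      constructor
      · intro h; exact ⟨x - j, by omega, by omega⟩
      · rintro ⟨k, hk, rfl⟩; omega
  rw [this, Int.alternating_sum_range_choose_of_ne (by omega), mul_zero]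
end

section
/- For n^{s_1} · Σ_{i=0}^{s_2-s_1} C(s_2, i)·(n-1)^i = n^{s_1} · Σ_{i+j = s_2-s_1, i,j ≥ 0} C(s_1+j-1, j)·(n-1)^j·n^i, as polynomials in n, for any 1 ≤ s_1 < s_2. -/
open Polynomial Finset

private lemma key_s16 (N m : ℕ) :
    ∑ i ∈ range (m + 2), (C ((N + 1).choose i : ℤ)) * (X - 1) ^ i =
      X * ∑ i ∈ range (m + 1), (C (N.choose i : ℤ)) * (X - 1) ^ i
        + C (N.choose (m + 1) : ℤ) * (X - 1) ^ (m + 1) := by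
  rw [Finset.sum_range_succ' (fun i => (C ((N + 1).choose i : ℤ)) * (X - 1) ^ i)]
  have hS : (∑ i ∈ range (m + 1), (C (N.choose i : ℤ)) * (X - 1) ^ i)
      = (∑ i ∈ range m, (C (N.choose (i + 1) : ℤ)) * (X - 1) ^ (i + 1)) + 1 := by
    rw [Finset.sum_range_succ' (fun i => (C (N.choose i : ℤ)) * (X - 1) ^ i)]
    simp
  have hext : (∑ i ∈ range (m + 1), (C (N.choose (i + 1) : ℤ)) * (X - 1) ^ (i + 1))
      = (∑ i ∈ range m, (C (N.choose (i + 1) : ℤ)) * (X - 1) ^ (i + 1))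
        + C (N.choose (m + 1) : ℤ) * (X - 1) ^ (m + 1) := by
    rw [Finset.sum_range_succ]
  have hX : (X : ℤ[X]) = (X - 1) + 1 := by ring
  calc (∑ i ∈ range (m + 1), (C ((N + 1).choose (i + 1) : ℤ)) * (X - 1) ^ (i + 1))
        + C ((N + 1).choose 0 : ℤ) * (X - 1) ^ 0
      = (∑ i ∈ range (m + 1), ((C (N.choose i : ℤ)) * (X - 1) ^ (i + 1)
          + (C (N.choose (i + 1) : ℤ)) * (X - 1) ^ (i + 1))) + 1 := by
        simp only [Nat.choose_succ_succ, Nat.choose_zero_right]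
        push_cast
        simp [add_mul, C_add]
    _ = (X - 1) * (∑ i ∈ range (m + 1), (C (N.choose i : ℤ)) * (X - 1) ^ i)
          + (∑ i ∈ range (m + 1), (C (N.choose (i + 1) : ℤ)) * (X - 1) ^ (i + 1)) + 1 := by
        rw [Finset.sum_add_distrib, Finset.mul_sum]
        congr 2
        exact Finset.sum_congr rfl (fun x _ => by ring)
    _ = _ := by
        rw [hext, hS]; ring

private lemma main_lemma (m s : ℕ) (hs : 1 ≤ s) :
    ∑ i ∈ range (m + 1), (C ((s + m).choose i : ℤ)) * (X - 1) ^ i =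
      ∑ j ∈ range (m + 1), (C ((s + j - 1).choose j : ℤ)) * (X - 1) ^ j * X ^ (m - j) := by
  induction m with
  | zero => simp
  | succ m ih =>
    have h1 : s + (m + 1) = (s + m) + 1 := by ring
    rw [h1, key_s16 (s + m) m, ih]
    rw [Finset.sum_range_succ (fun j => (C ((s + j - 1).choose j : ℤ)) * (X - 1) ^ j * X ^ (m + 1 - j))]
    have h2 : s + (m + 1) - 1 = s + m := by omega
    have h3 : ∀ j ∈ range (m + 1),
        (C ((s + j - 1).choose j : ℤ)) * (X - 1) ^ j * X ^ (m + 1 - j)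
          = X * ((C ((s + j - 1).choose j : ℤ)) * (X - 1) ^ j * X ^ (m - j)) := by
      intro j hj
      rw [Finset.mem_range] at hj
      have : m + 1 - j = (m - j) + 1 := by omega
      rw [this, pow_succ]; ring
    rw [Finset.sum_congr rfl h3, ← Finset.mul_sum, h2]
    simp [Nat.sub_self]

open Polynomial in
/-- As polynomials in `n` (here the variable `X`), for `1 ≤ s₁ < s₂`:
`n^{s₁} Σ_{i=0}^{s₂-s₁} C(s₂,i)(n-1)^i
  = n^{s₁} Σ_{i+j=s₂-s₁} C(s₁+j-1,j)(n-1)^j n^i`. -/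
theorem two_rank_chain_count_identity (s₁ s₂ : ℕ) (hs₁ : 1 ≤ s₁) (hs : s₁ < s₂) :
    (X : ℤ[X]) ^ s₁ *
        ∑ i ∈ Finset.range (s₂ - s₁ + 1), (C (s₂.choose i : ℤ)) * (X - 1) ^ i =
      (X : ℤ[X]) ^ s₁ *
        ∑ j ∈ Finset.range (s₂ - s₁ + 1),
          (C ((s₁ + j - 1).choose j : ℤ)) * (X - 1) ^ j * X ^ (s₂ - s₁ - j) := by
  have h : s₂ = s₁ + (s₂ - s₁) := by omega
  congr 1
  calc ∑ i ∈ Finset.range (s₂ - s₁ + 1), (C (s₂.choose i : ℤ)) * (X - 1) ^ i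
      = ∑ i ∈ Finset.range (s₂ - s₁ + 1), (C ((s₁ + (s₂ - s₁)).choose i : ℤ)) * (X - 1) ^ i := by
        rw [← h]
    _ = _ := main_lemma (s₂ - s₁) s₁ hs₁
end

section
/- For 2 ≤ d ≤ k, the two expressions Σ_{j=d}^{k} (-1)^{k-j}·S(j-1, d-1) and Σ_{r=0}^{k-d} (-1)^r · C(k, k-r) · S(k-r, d) are equal, where S denotes Stirling numbers of the second kind. -/
lemma stirling2_zero_succ (d : ℕ) : stirling2 0 (d+1) = 0 := rfl
lemma stirling2_succ_succ (n d : ℕ) :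
    stirling2 (n+1) (d+1) = stirling2 n d + (d+1) * stirling2 n (d+1) := rfl

lemma stirling2_eq_zero : ∀ n k : ℕ, n < k → stirling2 n k = 0
  | 0, _+1, _ => rfl
  | n+1, k+1, h => by
      rw [stirling2_succ_succ, stirling2_eq_zero n k (by omega),
        stirling2_eq_zero n (k+1) (by omega)]
      ring

/-- `Σ_{m=0}^{k} (-1)^m C(k,m) S(m,d)` -/
def Hsum (k d : ℕ) : ℤ :=
  ∑ m ∈ Finset.range (k+1), (-1)^m * (k.choose m) * (stirling2 m d : ℤ)

/-- `Σ_{j=0}^{k-1} (-1)^j S(j,d)` -/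
def Esum (k d : ℕ) : ℤ :=
  ∑ j ∈ Finset.range k, (-1)^j * (stirling2 j d : ℤ)

lemma neg_one_pow_sub {a b : ℕ} (h : b ≤ a) :
    ((-1:ℤ))^(a-b) = (-1)^a * (-1)^b := by
  have h1 : ((-1:ℤ))^(a-b) * (-1)^b * (-1)^b = (-1)^a * (-1)^b := by
    rw [← pow_add, Nat.sub_add_cancel h]
  have h2 : ((-1:ℤ))^b * (-1)^b = 1 := by
    rw [← pow_add, ← two_mul, pow_mul]; norm_num
  calc ((-1:ℤ))^(a-b) = (-1)^(a-b) * ((-1)^b * (-1)^b) := by rw [h2, mul_one]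
    _ = (-1)^(a-b) * (-1)^b * (-1)^b := by ring
    _ = (-1)^a * (-1)^b := h1

lemma Hsum_rec (k d : ℕ) :
    Hsum (k+1) (d+1) = -(Hsum k d + (d : ℤ) * Hsum k (d+1)) := by
  unfold Hsum
  rw [Finset.sum_range_succ']
  have hlast : ((-1:ℤ))^0 * (((k+1).choose 0 : ℕ) : ℤ) * (stirling2 0 (d+1) : ℤ) = 0 := by
    simp [stirling2_zero_succ]
  rw [hlast, add_zero]
  have key : ∀ i ∈ Finset.range (k+1),
      (-1:ℤ)^(i+1) * (((k+1).choose (i+1) : ℕ) : ℤ) * (stirling2 (i+1) (d+1) : ℤ)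
        = ((-1:ℤ)^(i+1) * ((k.choose (i+1) : ℕ) : ℤ) * (stirling2 (i+1) (d+1) : ℤ)
            - (-1:ℤ)^i * ((k.choose i : ℕ) : ℤ) * (stirling2 i (d+1) : ℤ))
          - ((-1:ℤ)^i * ((k.choose i : ℕ) : ℤ) * (stirling2 i d : ℤ)
             + (d:ℤ) * ((-1:ℤ)^i * ((k.choose i : ℕ) : ℤ) * (stirling2 i (d+1) : ℤ))) := by
    intro i _
    rw [Nat.choose_succ_succ, stirling2_succ_succ]
    push_cast
    ring
  rw [Finset.sum_congr rfl key, Finset.sum_sub_distrib,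
    Finset.sum_range_sub (fun i => (-1:ℤ)^i * ((k.choose i : ℕ) : ℤ) * (stirling2 i (d+1) : ℤ)),
    Finset.sum_add_distrib, ← Finset.mul_sum]
  simp [Nat.choose_succ_self, stirling2_zero_succ]

lemma Esum_rec (k d : ℕ) :
    Esum (k+1) (d+1) = -(Esum k d + ((d:ℤ)+1) * Esum k (d+1)) := by
  unfold Esum
  rw [Finset.sum_range_succ']
  have hlast : ((-1:ℤ))^0 * (stirling2 0 (d+1) : ℤ) = 0 := by
    simp [stirling2_zero_succ]
  rw [hlast, add_zero]
  have key : ∀ i ∈ Finset.range k,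
      (-1:ℤ)^(i+1) * (stirling2 (i+1) (d+1) : ℤ)
        = -((-1:ℤ)^i * (stirling2 i d : ℤ)
            + ((d:ℤ)+1) * ((-1:ℤ)^i * (stirling2 i (d+1) : ℤ))) := by
    intro i _
    rw [stirling2_succ_succ]
    push_cast
    ring
  rw [Finset.sum_congr rfl key, Finset.sum_neg_distrib, Finset.sum_add_distrib,
    ← Finset.mul_sum]

lemma Hsum_zero (k : ℕ) : Hsum k 0 = 1 := by
  unfold Hsum
  rw [Finset.sum_eq_single 0]
  · simp [stirling2]
  · rintro (_|m) hm hne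
    · exact absurd rfl hne
    · simp [stirling2]
  · intro h; exact absurd (Finset.mem_range.mpr (Nat.succ_pos k)) h

lemma Esum_zero_succ (k : ℕ) : Esum (k+1) 0 = 1 := by
  unfold Esum
  rw [Finset.sum_eq_single 0]
  · simp [stirling2]
  · rintro (_|j) hj hne
    · exact absurd rfl hne
    · simp [stirling2]
  · intro h; exact absurd (Finset.mem_range.mpr (Nat.succ_pos k)) h

lemma main_claim : ∀ k d : ℕ, Hsum k (d+1) = - Esum k d := by
  intro k
  induction k with
  | zero =>
      intro d
      unfold Hsum Esum
      simp [stirling2_zero_succ]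
  | succ k ih =>
      intro d
      cases d with
      | zero =>
          rw [Hsum_rec, Hsum_zero, Esum_zero_succ]
          push_cast
          ring
      | succ e =>
          rw [Hsum_rec, ih e, ih (e+1), Esum_rec]
          push_cast
          ring

/-- For `2 ≤ d ≤ k`,
`Σ_{j=d}^{k} (-1)^{k-j} S(j-1,d-1) = Σ_{r=0}^{k-d} (-1)^r C(k,k-r) S(k-r,d)`. -/
theorem stirling_alternating_identity (k d : ℕ) (hd : 2 ≤ d) (hdk : d ≤ k) :
    ∑ j ∈ Finset.Icc d k, (-1 : ℤ) ^ (k - j) * (stirling2 (j - 1) (d - 1) : ℤ) =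
      ∑ r ∈ Finset.range (k - d + 1),
        (-1 : ℤ) ^ r * (k.choose (k - r)) * (stirling2 (k - r) d : ℤ) := by
  -- LHS = (-1)^(k-1) * Esum k (d-1)
  have hL : ∑ j ∈ Finset.Icc d k, (-1 : ℤ) ^ (k - j) * (stirling2 (j - 1) (d - 1) : ℤ)
      = (-1:ℤ)^(k-1) * Esum k (d-1) := by
    have hsub : Finset.Icc d k ⊆ Finset.range (k+1) := by
      intro j hj
      rw [Finset.mem_Icc] at hj
      rw [Finset.mem_range]
      omega
    rw [Finset.sum_subset hsub (by
      intro j hj hnot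
      rw [Finset.mem_range] at hj
      rw [Finset.mem_Icc, not_and_or] at hnot
      have hjd : j < d := by omega
      have : stirling2 (j-1) (d-1) = 0 := stirling2_eq_zero _ _ (by omega)
      simp [this])]
    rw [Finset.sum_range_succ']
    have h0 : ((-1:ℤ))^(k-0) * (stirling2 (0-1) (d-1) : ℤ) = 0 := by
      have : stirling2 0 (d-1) = 0 := stirling2_eq_zero _ _ (by omega)
      simp [this]
    rw [h0, add_zero, Esum, Finset.mul_sum]
    apply Finset.sum_congr rfl
    intro i hi
    rw [Finset.mem_range] at hi
    have h1 : k - (i+1) = (k-1) - i := by omega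
    have h2 : i + 1 - 1 = i := by omega
    rw [h1, h2, neg_one_pow_sub (by omega : i ≤ k - 1)]
    ring
  -- RHS = (-1)^k * Hsum k d
  have hR : ∑ r ∈ Finset.range (k - d + 1),
        (-1 : ℤ) ^ r * (k.choose (k - r)) * (stirling2 (k - r) d : ℤ)
      = (-1:ℤ)^k * Hsum k d := by
    have hsub : Finset.range (k-d+1) ⊆ Finset.range (k+1) := by
      apply Finset.range_subset_range.mpr; omega
    rw [Finset.sum_subset hsub (by
      intro r hr hnot
      rw [Finset.mem_range] at hr hnot
      have : stirling2 (k-r) d = 0 := stirling2_eq_zero _ _ (by omega)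
      simp [this])]
    rw [← Finset.sum_range_reflect]
    rw [Hsum, Finset.mul_sum]
    apply Finset.sum_congr rfl
    intro m hm
    rw [Finset.mem_range] at hm
    have h1 : k + 1 - 1 - m = k - m := by omega
    have h2 : k - (k - m) = m := by omega
    rw [h1, h2, neg_one_pow_sub (by omega : m ≤ k)]
    ring
  rw [hL, hR]
  obtain ⟨e, rfl⟩ : ∃ e, d = e + 2 := ⟨d - 2, by omega⟩
  have hmain : Hsum k (e+2) = - Esum k (e+1) := main_claim k (e+1)
  have hde : e + 2 - 1 = e + 1 := rfl
  rw [hde, hmain]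
  have hk1 : (-1:ℤ)^k = -(-1:ℤ)^(k-1) := by
    conv_lhs => rw [show k = (k-1)+1 by omega]
    rw [pow_succ]
    ring
  rw [hk1]
  ring
end

section
/- Let X be a (complex) character of a finite group G taking exactly k distinct nonzero values, all of which are nonzero. Then the k class functions X, X^2, ..., X^k (pointwise powers) are linearly independent in the space of class functions on G. -/
/-- Let `X` be the character of a finite-dimensional complex representation of a
finite group `G`, taking exactly `k` distinct nonzero values. Then the pointwise
powers `X, X², …, X^k` are linearly independent class functions on `G`. -/
theorem tensor_power_characters_linearIndependent
    (G : Type) [Group G] [Finite G] (X : G → ℂ) (k : ℕ)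
    (hchar : ∃ V : FDRep ℂ G, X = V.character)
    (hk : {v : ℂ | v ≠ 0 ∧ ∃ g : G, X g = v}.ncard = k) :
    LinearIndependent ℂ (fun j : Fin k => (fun g => X g ^ ((j : ℕ) + 1) : G → ℂ)) := by
  classical
  rw [Fintype.linearIndependent_iff]
  intro c hc
  set S := {v : ℂ | v ≠ 0 ∧ ∃ g : G, X g = v} with hS
  have hSfin : S.Finite :=
    (Set.finite_range X).subset (by rintro v ⟨-, g, rfl⟩; exact ⟨g, rfl⟩)
  set p : Polynomial ℂ := ∑ j : Fin k, Polynomial.monomial ((j : ℕ) + 1) (c j) with hp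
  have hev : ∀ w : ℂ, p.eval w = ∑ j : Fin k, c j * w ^ ((j : ℕ) + 1) := by
    intro w; simp [hp, Polynomial.eval_finset_sum]
  have heval : ∀ v ∈ insert (0 : ℂ) hSfin.toFinset, p.eval v = 0 := by
    intro v hv
    simp only [Finset.mem_insert, Set.Finite.mem_toFinset] at hv
    rcases hv with rfl | ⟨hv0, g, rfl⟩
    · simp [hev]
    · have := congrFun hc g
      simp only [Finset.sum_apply, Pi.smul_apply, smul_eq_mul, Pi.zero_apply] at this
      simpa [hev] using this
  have hcard : (insert (0 : ℂ) hSfin.toFinset).card = k + 1 := by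
    rw [Finset.card_insert_of_notMem]
    · rw [← Set.ncard_eq_toFinset_card S hSfin, hk]
    · simp only [Set.Finite.mem_toFinset]
      rintro ⟨h0, -⟩; exact h0 rfl
  have hdeg : p.natDegree ≤ k := by
    refine Polynomial.natDegree_sum_le_of_forall_le _ _ fun j _ => ?_
    exact (Polynomial.natDegree_monomial_le _).trans (by omega)
  have hp0 : p = 0 :=
    Polynomial.eq_zero_of_natDegree_lt_card_of_eval_eq_zero' p _ heval (by omega)
  intro i
  have hco := congrArg (fun q => Polynomial.coeff q ((i : ℕ) + 1)) hp0
  simp only [hp, Polynomial.finset_sum_coeff, Polynomial.coeff_monomial,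
    Polynomial.coeff_zero] at hco
  rwa [Finset.sum_eq_single i (fun j _ hji => by
      rw [if_neg]; exact fun h => hji (Fin.ext (by omega)))
      (fun h => absurd (Finset.mem_univ i) h), if_pos rfl] at hco
end
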